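/- arXiv:2605.02713 — 9 statements merged into one kernel-verified Lean document; each statement's English description precedes it below -/
import Mathlib

section
/- Let α ∈ (0,1), let q ≥ 2 be an integer and n ≥ 1. Then s(n,r) ≤ s(n,1) for every r ∈ {1,…,q−1}, and s(n,1) = s(n,q−1); that is, the maximum of s(n,r) over r ∈ {1,…,q−1} is attained at r = 1 and at r = q−1. -/
/-- `s α q n r = ∑_{i,j,k,l=1}^n α^{r|i−j|} α^{r|k−l|} α^{(q−r)|i−k|} α^{(q−r)|j−l|}`. -/
noncomputable def s (α : ℝ) (q n r : ℕ) : ℝ :=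
  ∑ i ∈ Finset.Icc 1 n, ∑ j ∈ Finset.Icc 1 n, ∑ k ∈ Finset.Icc 1 n, ∑ l ∈ Finset.Icc 1 n,
    α ^ (r * Nat.dist i j) * α ^ (r * Nat.dist k l) *
      α ^ ((q - r) * Nat.dist i k) * α ^ ((q - r) * Nat.dist j l)

lemma key_real {c d : ℝ} (hc : 0 < c) (hd : 0 < d) (r m : ℕ) :
    c ^ (r + 1) * d ^ (m + 1) + d ^ (r + 1) * c ^ (m + 1) ≤
      c * d ^ (r + m + 1) + d * c ^ (r + m + 1) := by
  have key : c * d ^ (r + m + 1) + d * c ^ (r + m + 1)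
      - (c ^ (r + 1) * d ^ (m + 1) + d ^ (r + 1) * c ^ (m + 1))
      = (d ^ r - c ^ r) * (c * d) * (d ^ m - c ^ m) := by
    ring
  have hprod : 0 ≤ (d ^ r - c ^ r) * (c * d) * (d ^ m - c ^ m) := by
    rcases le_total c d with h | h
    · have h1 : c ^ r ≤ d ^ r := pow_le_pow_left₀ hc.le h r
      have h2 : c ^ m ≤ d ^ m := pow_le_pow_left₀ hc.le h m
      exact mul_nonneg (mul_nonneg (by linarith) (mul_pos hc hd).le) (by linarith)
    · have h1 : d ^ r ≤ c ^ r := pow_le_pow_left₀ hd.le h r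
      have h2 : d ^ m ≤ c ^ m := pow_le_pow_left₀ hd.le h m
      have hp : 0 ≤ (c ^ r - d ^ r) * (c * d) * (c ^ m - d ^ m) :=
        mul_nonneg (mul_nonneg (by linarith) (mul_pos hc hd).le) (by linarith)
      nlinarith [hp]
  linarith

lemma key_pow {α : ℝ} (hα : 0 < α) (a b r m : ℕ) :
    α ^ ((r + 1) * a + (m + 1) * b) + α ^ ((r + 1) * b + (m + 1) * a) ≤
      α ^ (a + (r + m + 1) * b) + α ^ (b + (r + m + 1) * a) := by
  have h := key_real (pow_pos hα a) (pow_pos hα b) r m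
  have e1 : (α ^ a) ^ (r + 1) * (α ^ b) ^ (m + 1) = α ^ ((r + 1) * a + (m + 1) * b) := by
    rw [← pow_mul, ← pow_mul, ← pow_add, Nat.mul_comm a, Nat.mul_comm b]
  have e2 : (α ^ b) ^ (r + 1) * (α ^ a) ^ (m + 1) = α ^ ((r + 1) * b + (m + 1) * a) := by
    rw [← pow_mul, ← pow_mul, ← pow_add, Nat.mul_comm a, Nat.mul_comm b]
  have e3 : α ^ a * (α ^ b) ^ (r + m + 1) = α ^ (a + (r + m + 1) * b) := by
    rw [← pow_mul, ← pow_add, Nat.mul_comm b]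
  have e4 : α ^ b * (α ^ a) ^ (r + m + 1) = α ^ (b + (r + m + 1) * a) := by
    rw [← pow_mul, ← pow_add, Nat.mul_comm a]
  rw [e1, e2, e3, e4] at h
  exact h

lemma s_swap (α : ℝ) (q n t : ℕ) : s α q n t =
    ∑ i ∈ Finset.Icc 1 n, ∑ j ∈ Finset.Icc 1 n, ∑ k ∈ Finset.Icc 1 n, ∑ l ∈ Finset.Icc 1 n,
      α ^ (t * Nat.dist i k) * α ^ (t * Nat.dist j l) *
        α ^ ((q - t) * Nat.dist i j) * α ^ ((q - t) * Nat.dist k l) := by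
  unfold s
  refine Finset.sum_congr rfl fun i _ => ?_
  rw [Finset.sum_comm]

/-- The maximum of `s(n,r)` over `r ∈ {1,…,q−1}` is attained at `r = 1` and at `r = q−1`. -/
theorem stmt_0 (α : ℝ) (hα : α ∈ Set.Ioo (0:ℝ) 1) (q n : ℕ) (hq : 2 ≤ q) (hn : 1 ≤ n) :
    (∀ r : ℕ, 1 ≤ r → r ≤ q - 1 → s α q n r ≤ s α q n 1) ∧ s α q n 1 = s α q n (q - 1) := by
  obtain ⟨hα0, hα1⟩ := hα
  constructor
  · intro r hr1 hr2
    have key : s α q n r + s α q n r ≤ s α q n 1 + s α q n 1 := by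
      nth_rewrite 2 [s_swap α q n r]
      nth_rewrite 2 [s_swap α q n 1]
      unfold s
      simp only [← Finset.sum_add_distrib]
      refine Finset.sum_le_sum fun i _ => Finset.sum_le_sum fun j _ =>
        Finset.sum_le_sum fun k _ => Finset.sum_le_sum fun l _ => ?_
      obtain ⟨r', hr'⟩ : ∃ r', r = r' + 1 := ⟨r - 1, by omega⟩
      obtain ⟨m', hm'⟩ : ∃ m', q - r = m' + 1 := ⟨q - r - 1, by omega⟩
      have hq1 : q - 1 = r' + m' + 1 := by omega
      have hcomb : ∀ t u x y z w : ℕ,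
          α ^ (t * x) * α ^ (t * y) * α ^ (u * z) * α ^ (u * w)
            = α ^ (t * (x + y) + u * (z + w)) := by
        intro t u x y z w
        rw [← pow_add, ← pow_add, ← pow_add]
        congr 1
        ring
      rw [hcomb, hcomb, hcomb, hcomb, hm', hr', hq1]
      have h := key_pow hα0 (Nat.dist i j + Nat.dist k l) (Nat.dist i k + Nat.dist j l) r' m'
      calc α ^ ((r' + 1) * (Nat.dist i j + Nat.dist k l) + (m' + 1) * (Nat.dist i k + Nat.dist j l))
            + α ^ ((r' + 1) * (Nat.dist i k + Nat.dist j l) + (m' + 1) * (Nat.dist i j + Nat.dist k l))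
          ≤ α ^ ((Nat.dist i j + Nat.dist k l) + (r' + m' + 1) * (Nat.dist i k + Nat.dist j l))
            + α ^ ((Nat.dist i k + Nat.dist j l) + (r' + m' + 1) * (Nat.dist i j + Nat.dist k l)) := h
        _ = α ^ (1 * (Nat.dist i j + Nat.dist k l) + (r' + m' + 1) * (Nat.dist i k + Nat.dist j l))
            + α ^ (1 * (Nat.dist i k + Nat.dist j l) + (r' + m' + 1) * (Nat.dist i j + Nat.dist k l)) := by
            rw [one_mul, one_mul]
    linarith
  · rw [s_swap α q n (q - 1)]
    have hqq : q - (q - 1) = 1 := by omega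
    rw [hqq]
    unfold s
    refine Finset.sum_congr rfl fun i _ => Finset.sum_congr rfl fun j _ =>
      Finset.sum_congr rfl fun k _ => Finset.sum_congr rfl fun l _ => ?_
    ring
end

section
/- Let α ∈ (0,1), let q ≥ 2 be an integer and n ≥ 1. Then the sequence r ↦ s(n,r) is log-convex: for every integer r with 1 ≤ r ≤ q−1 one has s(n,r)² ≤ s(n,r−1) · s(n,r+1). -/
/-- Exponent of the summand of `s` at the point `p = (i,j,k,l)`. -/
def E (q r : ℕ) (p : ℕ × ℕ × ℕ × ℕ) : ℕ :=
  r * Nat.dist p.1 p.2.1 + r * Nat.dist p.2.2.1 p.2.2.2 +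
    (q - r) * Nat.dist p.1 p.2.2.1 + (q - r) * Nat.dist p.2.1 p.2.2.2

lemma s_eq (α : ℝ) (q n r : ℕ) :
    s α q n r = ∑ p ∈ Finset.Icc 1 n ×ˢ (Finset.Icc 1 n ×ˢ (Finset.Icc 1 n ×ˢ Finset.Icc 1 n)),
      α ^ E q r p := by
  simp [s, E, Finset.sum_product, pow_add, mul_assoc]

lemma E_avg (q r : ℕ) (hr : 1 ≤ r) (hr' : r + 1 ≤ q) (p : ℕ × ℕ × ℕ × ℕ) :
    E q (r - 1) p + E q (r + 1) p = 2 * E q r p := by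
  unfold E
  have h1 : q - (r - 1) = (q - r) + 1 := by omega
  have h2 : q - (r + 1) = (q - r) - 1 := by omega
  have h3 : r - 1 + (r + 1) = 2 * r := by omega
  have h4 : (q - r) + 1 + ((q - r) - 1) = 2 * (q - r) := by omega
  rw [h1, h2]
  set a := Nat.dist p.1 p.2.1
  set b := Nat.dist p.2.2.1 p.2.2.2
  set c := Nat.dist p.1 p.2.2.1
  set d := Nat.dist p.2.1 p.2.2.2
  have : ∀ x y z w : ℕ, x + y = z → x * w + y * w = z * w := by
    intro x y z w h; rw [← Nat.add_mul, h]
  calc (r - 1) * a + (r - 1) * b + ((q - r) + 1) * c + ((q - r) + 1) * d +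
        ((r + 1) * a + (r + 1) * b + ((q - r) - 1) * c + ((q - r) - 1) * d)
      = ((r - 1) * a + (r + 1) * a) + ((r - 1) * b + (r + 1) * b) +
        (((q - r) + 1) * c + ((q - r) - 1) * c) + (((q - r) + 1) * d + ((q - r) - 1) * d) := by
        ring
    _ = 2 * r * a + 2 * r * b + 2 * (q - r) * c + 2 * (q - r) * d := by
        rw [this _ _ _ a h3, this _ _ _ b h3, this _ _ _ c h4, this _ _ _ d h4]
    _ = 2 * (r * a + r * b + (q - r) * c + (q - r) * d) := by ring

/-- Log-convexity of `r ↦ s(n,r)`: `s(n,r)² ≤ s(n,r−1) · s(n,r+1)` for `1 ≤ r ≤ q−1`. -/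
theorem stmt_1 (α : ℝ) (hα : α ∈ Set.Ioo (0:ℝ) 1) (q n : ℕ) (hq : 2 ≤ q) (hn : 1 ≤ n)
    (r : ℕ) (hr : 1 ≤ r) (hr' : r ≤ q - 1) :
    (s α q n r) ^ 2 ≤ s α q n (r - 1) * s α q n (r + 1) := by
  have hα0 : (0:ℝ) < α := hα.1
  have hrq : r + 1 ≤ q := by omega
  rw [s_eq, s_eq, s_eq]
  set S := Finset.Icc 1 n ×ˢ (Finset.Icc 1 n ×ˢ (Finset.Icc 1 n ×ˢ Finset.Icc 1 n))
  calc (∑ p ∈ S, α ^ E q r p) ^ 2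
      = (∑ p ∈ S, Real.sqrt (α ^ E q (r - 1) p) * Real.sqrt (α ^ E q (r + 1) p)) ^ 2 := by
        congr 1
        refine Finset.sum_congr rfl fun p _ => ?_
        rw [← Real.sqrt_mul (by positivity), ← pow_add, E_avg q r hr hrq p, pow_mul',
          Real.sqrt_sq (by positivity)]
    _ ≤ (∑ p ∈ S, Real.sqrt (α ^ E q (r - 1) p) ^ 2) *
        (∑ p ∈ S, Real.sqrt (α ^ E q (r + 1) p) ^ 2) :=
        Finset.sum_mul_sq_le_sq_mul_sq S _ _
    _ = (∑ p ∈ S, α ^ E q (r - 1) p) * (∑ p ∈ S, α ^ E q (r + 1) p) := by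
        congr 1 <;> exact Finset.sum_congr rfl fun p _ => Real.sq_sqrt (by positivity)
end

section
/- Let β > 0 and γ ∈ (0,1). Then for every integer n ≥ 1: if β < 1, then ∑_{k=1}^n k^{−1/2} (1 − γ/n^β)^k ≤ 1 + √(n^β π / γ); and if β ≥ 1, then ∑_{k=1}^n k^{−1/2} (1 − γ/n^β)^k ≤ 1 + 2√n. -/
/-!
Write `ε = γ / n ^ β ∈ (0, 1)`. For `β ≥ 1` the factor `(1 - ε) ^ k` is at most `1`, and
`∑_{k ≤ n} k^{-1/2} ≤ 2 √n` by telescoping with `1 / √(k+1) ≤ 2 (√(k+1) - √k)`.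
For `β < 1` use `(1 - ε) ^ k ≤ exp (-ε k)`: the terms are then bounded by values at the integers of
the decreasing function `x^{-1/2} e^{-ε x}`, so apart from the first one (at most `1`) they sum to at
most `∫₀^∞ x^{-1/2} e^{-ε x} dx = Γ(1/2) / √ε = √(π / ε) = √(n^β π / γ)`.
-/

open Real Set MeasureTheory

lemma sum_Icc_one_div_sqrt_le (n : ℕ) : ∑ k ∈ Finset.Icc 1 n, 1 / √(k : ℝ) ≤ 2 * √n := by
  induction n with
  | zero => simp
  | succ n ih =>
    rw [Finset.sum_Icc_succ_top (by omega), Nat.cast_succ]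
    have hpos : 0 < √((n : ℝ) + 1) := by positivity
    have hstep : 1 / √((n : ℝ) + 1) ≤ 2 * √((n : ℝ) + 1) - 2 * √n := by
      rw [div_le_iff₀ hpos]
      nlinarith [sq_sqrt (n.cast_nonneg : (0 : ℝ) ≤ n), sq_sqrt (by positivity : (0 : ℝ) ≤ n + 1),
        sq_nonneg (√((n : ℝ) + 1) - √n), sqrt_nonneg (n : ℝ)]
    linarith

lemma one_sub_pow_le_exp_neg_mul {ε : ℝ} (hε : ε ≤ 1) (k : ℕ) :
    (1 - ε) ^ k ≤ exp (-(ε * k)) := by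
  calc (1 - ε) ^ k ≤ exp (-ε) ^ k := pow_le_pow_left₀ (by linarith) (one_sub_le_exp_neg ε) k
    _ = exp (-(ε * k)) := by rw [← exp_nat_mul]; ring_nf

lemma one_div_sqrt_mul_one_sub_pow_le {ε : ℝ} (hε : ε ≤ 1) (k : ℕ) :
    1 / √(k : ℝ) * (1 - ε) ^ k ≤ (k : ℝ) ^ (-(1 / 2) : ℝ) * exp (-(ε * k)) := by
  rw [rpow_neg k.cast_nonneg, ← sqrt_eq_rpow, one_div]
  gcongr
  exact one_sub_pow_le_exp_neg_mul hε k

lemma antitoneOn_rpow_neg_half_mul_exp_neg_mul {ε : ℝ} (hε : 0 ≤ ε) :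
    AntitoneOn (fun x : ℝ ↦ x ^ (-(1 / 2) : ℝ) * exp (-(ε * x))) (Ioi 0) := by
  intro x hx y _ hxy
  have hx : 0 < x := hx
  exact mul_le_mul (rpow_le_rpow_of_nonpos hx hxy (by norm_num))
    (exp_le_exp.2 (by nlinarith)) (exp_pos _).le (rpow_nonneg hx.le _)

lemma integrableOn_rpow_neg_half_mul_exp_neg_mul {ε : ℝ} (hε : 0 < ε) :
    IntegrableOn (fun x : ℝ ↦ x ^ (-(1 / 2) : ℝ) * exp (-(ε * x))) (Ioi 0) := by
  simpa [rpow_one] using integrableOn_rpow_mul_exp_neg_mul_rpow (p := 1) (s := -(1 / 2))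
    (by norm_num) one_pos hε

lemma integral_rpow_neg_half_mul_exp_neg_mul {ε : ℝ} (hε : 0 < ε) :
    ∫ x in Ioi (0 : ℝ), x ^ (-(1 / 2) : ℝ) * exp (-(ε * x)) = √(π / ε) := by
  have h := integral_rpow_mul_exp_neg_mul_Ioi (a := 1 / 2) one_half_pos hε
  norm_num at h
  rw [h, Gamma_one_half_eq, ← sqrt_eq_rpow, ← sqrt_mul (by positivity), inv_mul_eq_div]

lemma sum_Icc_two_le_integral_Ioi_one {f : ℝ → ℝ} (hf : AntitoneOn f (Ici 1))
    (hf_nonneg : ∀ x ∈ Ioi (1 : ℝ), 0 ≤ f x) (hf_int : IntegrableOn f (Ioi 1)) (n : ℕ) :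
    ∑ k ∈ Finset.Icc 2 n, f k ≤ ∫ x in Ioi 1, f x := by
  have hint_nonneg : 0 ≤ ∫ x in Ioi 1, f x := setIntegral_nonneg measurableSet_Ioi hf_nonneg
  rcases Nat.lt_or_ge n 1 with hn | hn
  · simp [Finset.Icc_eq_empty_of_lt (by omega : n < 2), hint_nonneg]
  have hsum : ∑ k ∈ Finset.Icc 2 n, f k = ∑ i ∈ Finset.Ico 1 n, f ↑(i + 1) := by
    rw [← Finset.Ico_add_one_right_eq_Icc, Finset.sum_Ico_add' (fun k : ℕ ↦ f k)]
  have hn' : (1 : ℝ) ≤ n := by exact_mod_cast hn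
  calc ∑ k ∈ Finset.Icc 2 n, f k = ∑ i ∈ Finset.Ico 1 n, f ↑(i + 1) := hsum
    _ ≤ ∫ x in (1 : ℝ)..n, f x := by
      simpa using (hf.mono fun x hx ↦ by exact_mod_cast hx.1).sum_le_integral_Ico hn
    _ ≤ ∫ x in Ioi 1, f x := by
      rw [intervalIntegral.integral_of_le hn']
      exact setIntegral_mono_set hf_int (ae_restrict_of_forall_mem measurableSet_Ioi hf_nonneg)
        Ioc_subset_Ioi_self.eventuallyLE

theorem sum_Icc_one_div_sqrt_mul_one_sub_pow_le {ε : ℝ} (hε0 : 0 < ε) (hε1 : ε ≤ 1) (n : ℕ) :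
    ∑ k ∈ Finset.Icc 1 n, 1 / √(k : ℝ) * (1 - ε) ^ k ≤ 1 + √(π / ε) := by
  set f : ℝ → ℝ := fun x ↦ x ^ (-(1 / 2) : ℝ) * exp (-(ε * x))
  have hf_nonneg : ∀ x, 0 ≤ x → 0 ≤ f x := fun x hx ↦ by positivity
  have hf_anti : AntitoneOn f (Ioi 0) := antitoneOn_rpow_neg_half_mul_exp_neg_mul hε0.le
  have hf_int : IntegrableOn f (Ioi 0) := integrableOn_rpow_neg_half_mul_exp_neg_mul hε0
  have hf_one : f 1 ≤ 1 := by
    simpa [f] using exp_le_one_iff.2 (neg_nonpos.2 hε0.le)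
  have hIoi : Ioi (1 : ℝ) ⊆ Ioi 0 := Ioi_subset_Ioi zero_le_one
  have hsub : Finset.Icc 1 n ⊆ insert 1 (Finset.Icc 2 n) := fun k hk ↦ by
    simp only [Finset.mem_insert, Finset.mem_Icc] at hk ⊢
    omega
  calc ∑ k ∈ Finset.Icc 1 n, 1 / √(k : ℝ) * (1 - ε) ^ k
      ≤ ∑ k ∈ Finset.Icc 1 n, f k :=
        Finset.sum_le_sum fun k _ ↦ one_div_sqrt_mul_one_sub_pow_le hε1 k
    _ ≤ ∑ k ∈ insert 1 (Finset.Icc 2 n), f k :=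
        Finset.sum_le_sum_of_subset_of_nonneg hsub fun k _ _ ↦ hf_nonneg k k.cast_nonneg
    _ = f 1 + ∑ k ∈ Finset.Icc 2 n, f k := by
      rw [Finset.sum_insert (by simp), Nat.cast_one]
    _ ≤ 1 + ∫ x in Ioi 1, f x := by
      gcongr
      exact sum_Icc_two_le_integral_Ioi_one
        (hf_anti.mono fun _ hx ↦ mem_Ioi.2 (zero_lt_one.trans_le hx))
        (fun x hx ↦ hf_nonneg x (zero_le_one.trans hx.le)) (hf_int.mono_set hIoi) n
    _ ≤ 1 + ∫ x in Ioi 0, f x := by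
      gcongr 1 + ?_
      exact setIntegral_mono_set hf_int
        (ae_restrict_of_forall_mem measurableSet_Ioi fun x hx ↦ hf_nonneg x (le_of_lt hx))
        hIoi.eventuallyLE
    _ = 1 + √(π / ε) := by rw [integral_rpow_neg_half_mul_exp_neg_mul hε0]

/-- Bound on `∑_{k=1}^n k^{−1/2}(1 − γ/n^β)^k`: at most `1 + √(n^β π/γ)` when `β < 1`
and at most `1 + 2√n` when `β ≥ 1`. -/
theorem stmt_3 (β γ : ℝ) (hβ : 0 < β) (hγ : γ ∈ Set.Ioo (0:ℝ) 1) (n : ℕ) (hn : 1 ≤ n) :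
    (β < 1 →
      ∑ k ∈ Finset.Icc 1 n, (1 / Real.sqrt k) * (1 - γ / (n : ℝ) ^ β) ^ k
        ≤ 1 + Real.sqrt ((n : ℝ) ^ β * Real.pi / γ)) ∧
    (1 ≤ β →
      ∑ k ∈ Finset.Icc 1 n, (1 / Real.sqrt k) * (1 - γ / (n : ℝ) ^ β) ^ k
        ≤ 1 + 2 * Real.sqrt n) := by
  obtain ⟨hγ0, hγ1⟩ := hγ
  have hnβ : 1 ≤ (n : ℝ) ^ β := one_le_rpow (by exact_mod_cast hn) hβ.le
  have hε0 : 0 < γ / (n : ℝ) ^ β := by positivity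
  have hε1 : γ / (n : ℝ) ^ β ≤ 1 := (div_le_one (by positivity)).2 (by linarith)
  refine ⟨fun _ ↦ ?_, fun _ ↦ ?_⟩
  · have h := sum_Icc_one_div_sqrt_mul_one_sub_pow_le hε0 hε1 n
    rwa [div_div_eq_mul_div, mul_comm π] at h
  · calc ∑ k ∈ Finset.Icc 1 n, 1 / √(k : ℝ) * (1 - γ / (n : ℝ) ^ β) ^ k
        ≤ ∑ k ∈ Finset.Icc 1 n, 1 / √(k : ℝ) :=
          Finset.sum_le_sum fun k _ ↦ mul_le_of_le_one_right (by positivity)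
            (pow_le_one₀ (by linarith) (by linarith))
      _ ≤ 2 * √n := sum_Icc_one_div_sqrt_le n
      _ ≤ 1 + 2 * √n := by linarith
end

section
/- Let q ≥ 1 be an integer, γ ∈ (0,1) and β ∈ (0,1), and set α_n := 1 − γ/n^β. Then sup_{t ∈ [0,1]} | (qγ/(2 n^{β+1})) · Λ_q(n,t) − t | → 0 as n → ∞; that is, Λ_q(n,t) = (2 n^{β+1}/(qγ)) · t · (1 + o(1)) uniformly in t ∈ [0,1]. -/
/-!
Write `ρ = α^q`. The double sum over `1 ≤ i, j ≤ m` has the closed form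
`(1 - ρ)² ∑ ρ^|i-j| = m (1 - ρ²) - 2ρ (1 - ρ^m)`, so `Λ_q(n,t) = ⌊nt⌋ (1+ρ)/(1-ρ) + O((1-ρ)⁻²)`.
With `ε = γ/n^β` we have `1 - ρ = ε ∑_{k<q} α^k ~ qε`, hence the prefactor `qε/(2n)` turns the main
term into `(⌊nt⌋/n)(1 + o(1))` and the error into `O(1/(nε)) = O(n^{β-1})`, which vanishes as `β < 1`.
-/

/-- `Λ_q(n,t) = ∑_{i=1}^{⌊nt⌋} ∑_{j=1}^{⌊nt⌋} α^{q|i−j|}`. -/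
noncomputable def Lam (α : ℝ) (q n : ℕ) (t : ℝ) : ℝ :=
  ∑ i ∈ Finset.Icc 1 ⌊(n : ℝ) * t⌋₊, ∑ j ∈ Finset.Icc 1 ⌊(n : ℝ) * t⌋₊,
    α ^ (q * Nat.dist i j)

open Finset Filter Topology

section Algebra

variable {R : Type*} [CommRing R]

lemma one_sub_mul_sum_pow_dist_succ (ρ : R) (m : ℕ) :
    (1 - ρ) * ∑ i ∈ Icc 1 m, ρ ^ Nat.dist i (m + 1) = ρ - ρ ^ (m + 1) := by
  induction m with
  | zero => simp
  | succ m ih =>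
    have hshift : ∑ i ∈ Icc 1 m, ρ ^ Nat.dist i (m + 2)
        = ρ * ∑ i ∈ Icc 1 m, ρ ^ Nat.dist i (m + 1) := by
      rw [mul_sum]
      refine sum_congr rfl fun i hi => ?_
      rw [mem_Icc] at hi
      rw [Nat.dist_eq_sub_of_le (by omega), Nat.dist_eq_sub_of_le (by omega),
        show m + 2 - i = m + 1 - i + 1 by omega, pow_succ']
    rw [sum_Icc_succ_top (by omega), hshift, Nat.dist_eq_sub_of_le (by omega),
      show m + 2 - (m + 1) = 1 by omega]
    linear_combination ρ * ih

lemma one_sub_sq_mul_sum_sum_pow_dist (ρ : R) (m : ℕ) :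
    (1 - ρ) ^ 2 * ∑ i ∈ Icc 1 m, ∑ j ∈ Icc 1 m, ρ ^ Nat.dist i j
      = m * (1 - ρ ^ 2) - 2 * ρ * (1 - ρ ^ m) := by
  induction m with
  | zero => simp
  | succ m ih =>
    have hrow := one_sub_mul_sum_pow_dist_succ ρ m
    simp_rw [sum_Icc_succ_top (show 1 ≤ m + 1 by omega), sum_add_distrib]
    simp_rw [Nat.dist_comm (m + 1), Nat.dist_self]
    push_cast
    linear_combination ih + 2 * (1 - ρ) * hrow

end Algebra

lemma abs_sum_sum_pow_dist_sub_le {ρ : ℝ} (h0 : 0 ≤ ρ) (h1 : ρ < 1) (m : ℕ) :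
    |∑ i ∈ Icc 1 m, ∑ j ∈ Icc 1 m, ρ ^ Nat.dist i j - m * (1 + ρ) / (1 - ρ)|
      ≤ 2 / (1 - ρ) ^ 2 := by
  have hpos : 0 < 1 - ρ := sub_pos.2 h1
  have hρm : ρ ^ m ≤ 1 := pow_le_one₀ h0 h1.le
  have hdiff : ∑ i ∈ Icc 1 m, ∑ j ∈ Icc 1 m, ρ ^ Nat.dist i j - m * (1 + ρ) / (1 - ρ)
      = -(2 * (ρ * (1 - ρ ^ m)) / (1 - ρ) ^ 2) := by
    rw [eq_div_of_mul_eq (pow_ne_zero 2 hpos.ne')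
      ((mul_comm _ _).trans (one_sub_sq_mul_sum_sum_pow_dist ρ m))]
    field_simp
    ring
  have hnum : 0 ≤ ρ * (1 - ρ ^ m) := mul_nonneg h0 (sub_nonneg.2 hρm)
  rw [hdiff, abs_neg, abs_of_nonneg (by positivity)]
  gcongr
  nlinarith [pow_nonneg h0 m]

lemma abs_mul_floor_sub_le (κ : ℝ) (n : ℕ) {t : ℝ} (ht : t ∈ Set.Icc (0 : ℝ) 1) :
    |κ * ⌊n * t⌋₊ - t| ≤ |κ| + |κ * n - 1| := by
  obtain ⟨ht0, ht1⟩ := ht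
  have hfloor : |(⌊n * t⌋₊ : ℝ) - n * t| ≤ 1 := by
    rw [abs_sub_comm, abs_of_nonneg (sub_nonneg.2 (Nat.floor_le (by positivity)))]
    exact (sub_le_iff_le_add'.2 (Nat.lt_floor_add_one _).le)
  calc |κ * ⌊n * t⌋₊ - t| = |κ * (⌊n * t⌋₊ - n * t) + (κ * n - 1) * t| := by ring_nf
    _ ≤ |κ| * |(⌊n * t⌋₊ : ℝ) - n * t| + |κ * n - 1| * |t| := by
      rw [← abs_mul, ← abs_mul]; exact abs_add_le _ _
    _ ≤ |κ| * 1 + |κ * n - 1| * 1 := by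
      gcongr; rw [abs_of_nonneg ht0]; exact ht1
    _ = |κ| + |κ * n - 1| := by ring

lemma tendstoUniformlyOn_of_abs_sub_mul_floor_le {F : ℕ → ℝ → ℝ} {κ e : ℕ → ℝ}
    (hκ : Tendsto (fun n => κ n * n) atTop (𝓝 1)) (he : Tendsto e atTop (𝓝 0))
    (hF : ∀ᶠ n in atTop, ∀ t ∈ Set.Icc (0 : ℝ) 1, |F n t - κ n * ⌊(n : ℝ) * t⌋₊| ≤ e n) :
    TendstoUniformlyOn F (fun t => t) atTop (Set.Icc 0 1) := by
  have hκ0 : Tendsto κ atTop (𝓝 0) := by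
    have h := hκ.mul tendsto_inv_atTop_nhds_zero_nat
    rw [one_mul] at h
    refine h.congr' ?_
    filter_upwards [eventually_ne_atTop 0] with n hn
    field_simp
  have hbound : Tendsto (fun n => e n + (|κ n| + |κ n * n - 1|)) atTop (𝓝 0) := by
    simpa using he.add (hκ0.abs.add (hκ.sub_const 1).abs)
  rw [Metric.tendstoUniformlyOn_iff]
  intro δ hδ
  filter_upwards [hF, hbound.eventually_lt_const hδ] with n hn hlt t ht
  rw [Real.dist_eq, abs_sub_comm]
  calc |F n t - t| ≤ |F n t - κ n * ⌊(n : ℝ) * t⌋₊| + |κ n * ⌊(n : ℝ) * t⌋₊ - t| :=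
        abs_sub_le _ _ _
    _ ≤ e n + (|κ n| + |κ n * n - 1|) := add_le_add (hn t ht) (abs_mul_floor_sub_le _ _ ht)
    _ < δ := hlt

lemma Lam_eq (α : ℝ) (q n : ℕ) (t : ℝ) :
    Lam α q n t = ∑ i ∈ Icc 1 ⌊(n : ℝ) * t⌋₊, ∑ j ∈ Icc 1 ⌊(n : ℝ) * t⌋₊,
      (α ^ q) ^ Nat.dist i j := by
  simp only [Lam, pow_mul]

lemma abs_mul_Lam_sub_le {q n : ℕ} (hq : 1 ≤ q) (hn : n ≠ 0) {ε : ℝ} (hε0 : 0 < ε)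
    (hε1 : ε < 1) (t : ℝ) :
    |q * ε / (2 * n) * Lam (1 - ε) q n t
        - q * (1 + (1 - ε) ^ q) / (2 * (∑ k ∈ range q, (1 - ε) ^ k) * n) * ⌊(n : ℝ) * t⌋₊|
      ≤ q / ((∑ k ∈ range q, (1 - ε) ^ k) ^ 2 * (n * ε)) := by
  set S := ∑ k ∈ range q, (1 - ε) ^ k
  set ρ := (1 - ε) ^ q
  have hρ0 : 0 ≤ ρ := pow_nonneg (by linarith) q
  have hρ1 : ρ < 1 := pow_lt_one₀ (by linarith) (by linarith) (by omega)
  have hS : 1 - ρ = ε * S := by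
    rw [← mul_neg_geom_sum, sub_sub_cancel]
  have hSpos : 0 < S := by
    have := mul_pos hε0 (sub_pos.2 hρ1)
    nlinarith
  have hc : 0 ≤ (q : ℝ) * ε / (2 * n) := by positivity
  have hn' : (0 : ℝ) < n := by positivity
  calc _ = q * ε / (2 * n) * |Lam (1 - ε) q n t - ⌊(n : ℝ) * t⌋₊ * (1 + ρ) / (1 - ρ)| := by
        rw [← abs_of_nonneg hc, ← abs_mul, abs_of_nonneg hc, hS]
        congr 1
        field_simp
    _ ≤ q * ε / (2 * n) * (2 / (1 - ρ) ^ 2) := by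
        rw [Lam_eq]
        exact mul_le_mul_of_nonneg_left (abs_sum_sum_pow_dist_sub_le hρ0 hρ1 _) hc
    _ = q / (S ^ 2 * (n * ε)) := by
        rw [hS]
        field_simp

theorem tendstoUniformlyOn_mul_Lam {q : ℕ} (hq : 1 ≤ q) {ε : ℕ → ℝ}
    (hε : Tendsto ε atTop (𝓝 0)) (hnε : Tendsto (fun n => n * ε n) atTop atTop) :
    TendstoUniformlyOn (fun n t => q * ε n / (2 * n) * Lam (1 - ε n) q n t) (fun t => t)
      atTop (Set.Icc 0 1) := by
  have hα : Tendsto (fun n => 1 - ε n) atTop (𝓝 1) := by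
    simpa using hε.const_sub 1
  have hS : Tendsto (fun n => ∑ k ∈ range q, (1 - ε n) ^ k) atTop (𝓝 q) := by
    simpa using tendsto_finsetSum (range q) fun k _ => hα.pow k
  have hκ : Tendsto (fun n => q * (1 + (1 - ε n) ^ q) / (2 * (∑ k ∈ range q, (1 - ε n) ^ k)))
      atTop (𝓝 1) := by
    have h := ((hα.pow q).const_add 1 |>.const_mul (q : ℝ)).div (hS.const_mul 2) (by positivity)
    rwa [one_pow, show (q : ℝ) * (1 + 1) / (2 * q) = 1 by field_simp; ring] at h
  have he : Tendsto (fun n => q / (∑ k ∈ range q, (1 - ε n) ^ k) ^ 2 / (n * ε n)) atTop (𝓝 0) :=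
    (tendsto_const_nhds.div (hS.pow 2) (by positivity)).div_atTop hnε
  refine tendstoUniformlyOn_of_abs_sub_mul_floor_le
    (κ := fun n => q * (1 + (1 - ε n) ^ q) / (2 * (∑ k ∈ range q, (1 - ε n) ^ k) * n))
    (hκ.congr' ?_) he ?_
  · filter_upwards [eventually_ne_atTop 0] with n hn
    field_simp
  · filter_upwards [eventually_ne_atTop 0, hε.eventually_lt_const one_pos,
      hnε.eventually_gt_atTop 0] with n hn hε1 hnε0 t _
    rw [div_div]
    exact abs_mul_Lam_sub_le hq hn (pos_of_mul_pos_right hnε0 (Nat.cast_nonneg n)) hε1 t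

/-- For `β < 1` and `α_n = 1 − γ/n^β`,
`(qγ/(2n^{β+1})) Λ_q(n,t) → t` uniformly in `t ∈ [0,1]`. -/
theorem stmt_4 (q : ℕ) (hq : 1 ≤ q) (γ β : ℝ)
    (hγ : γ ∈ Set.Ioo (0:ℝ) 1) (hβ : β ∈ Set.Ioo (0:ℝ) 1) :
    TendstoUniformlyOn
      (fun (n : ℕ) (t : ℝ) =>
        ((q : ℝ) * γ / (2 * (n : ℝ) ^ (β + 1))) * Lam (1 - γ / (n : ℝ) ^ β) q n t)
      (fun t => t) Filter.atTop (Set.Icc 0 1) := by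
  have hnβ : Tendsto (fun n : ℕ => (n : ℝ) ^ β) atTop atTop :=
    (tendsto_rpow_atTop hβ.1).comp tendsto_natCast_atTop_atTop
  have hnε : Tendsto (fun n : ℕ => n * (γ / (n : ℝ) ^ β)) atTop atTop := by
    have hn1β := (tendsto_rpow_atTop (sub_pos.2 hβ.2)).comp tendsto_natCast_atTop_atTop
    refine (hn1β.const_mul_atTop hγ.1).congr' ?_
    filter_upwards [eventually_ne_atTop 0] with n hn
    have hn' : (0 : ℝ) < n := by positivity
    simp only [Function.comp, Real.rpow_sub hn', Real.rpow_one]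
    field_simp
  refine (tendstoUniformlyOn_mul_Lam hq (tendsto_const_nhds.div_atTop hnβ) hnε).congr ?_
  filter_upwards [eventually_ne_atTop 0] with n hn t _
  have hn' : (0 : ℝ) < n := by positivity
  simp only [Real.rpow_add hn', Real.rpow_one]
  field_simp
end

section
/- Let q ≥ 1 be an integer and γ ∈ (0,1), and set α_n := 1 − γ/n (the case β = 1). Then sup_{t ∈ [0,1]} | (q²γ²/(2 n²)) · Λ_q(n,t) − (exp(−qγt) − 1 + qγt) | → 0 as n → ∞; that is, Λ_q(n,t) = (2 n²/(q²γ²)) · (exp(−qγt) − 1 + qγt) · (1 + o(1)) uniformly in t ∈ [0,1]. -/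
open Finset

section KMS

variable {R : Type*} [CommRing R]

-- `(ρ^|i-j|)` is the Kac–Murdock–Szegő matrix.
def kmsSum (ρ : R) (m : ℕ) : R :=
  ∑ i ∈ Icc 1 m, ∑ j ∈ Icc 1 m, ρ ^ Nat.dist i j

lemma sum_Icc_pow_dist_succ_left (ρ : R) (m : ℕ) :
    ∑ j ∈ Icc 1 m, ρ ^ Nat.dist (m + 1) j = ρ * ∑ k ∈ range m, ρ ^ k := by
  rw [← Ico_add_one_right_eq_Icc, sum_Ico_eq_sum_range, mul_sum, ← sum_range_reflect]
  refine sum_congr rfl fun k hk => ?_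
  rw [mem_range] at hk
  rw [Nat.dist_eq_sub_of_le_right (by omega), ← pow_succ']
  congr 1
  omega

lemma kmsSum_succ (ρ : R) (m : ℕ) :
    kmsSum ρ (m + 1) = kmsSum ρ m + 2 * ρ * ∑ k ∈ range m, ρ ^ k + 1 := by
  have hm : m + 1 ∉ Icc 1 m := by simp
  simp only [kmsSum, ← insert_Icc_right_eq_Icc_add_one (Nat.le_add_left 1 m), sum_insert hm,
    sum_add_distrib, Nat.dist_self, pow_zero]
  rw [sum_comm (s := Icc 1 m) (t := Icc 1 m)]
  simp only [Nat.dist_comm _ (m + 1), sum_Icc_pow_dist_succ_left]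
  ring

lemma kmsSum_mul_one_sub_sq (ρ : R) (m : ℕ) :
    kmsSum ρ m * (1 - ρ) ^ 2 = m * (1 - ρ ^ 2) - 2 * ρ * (1 - ρ ^ m) := by
  induction m with
  | zero => simp [kmsSum]
  | succ m ih =>
    rw [kmsSum_succ]
    push_cast
    linear_combination ih + 2 * ρ * (ρ - 1) * geom_sum_mul ρ m

end KMS

lemma Lam_eq_kmsSum (α : ℝ) (q n : ℕ) (t : ℝ) :
    Lam α q n t = kmsSum (α ^ q) ⌊(n : ℝ) * t⌋₊ := by
  simp only [Lam, kmsSum, pow_mul]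

open Real

lemma exp_neg_sub_exp_neg_le {w u : ℝ} (hw : 0 ≤ w) (hwu : w ≤ u) :
    exp (-w) - exp (-u) ≤ u - w := by
  have hsplit : exp (-u) = exp (-w) * exp (-(u - w)) := by rw [← exp_add]; ring_nf
  have hw1 : exp (-w) ≤ 1 := exp_le_one_iff.mpr (by linarith)
  nlinarith [one_sub_le_exp_neg (u - w), exp_pos (-w)]

lemma one_sub_pow_le_inv_one_add_mul {x : ℝ} (hx0 : 0 ≤ x) (hx1 : x ≤ 1) (k : ℕ) :
    (1 - x) ^ k ≤ (1 + k * x)⁻¹ :=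
  calc (1 - x) ^ k ≤ exp (-x) ^ k := pow_le_pow_left₀ (by linarith) (one_sub_le_exp_neg x) k
    _ = (exp (k * x))⁻¹ := by rw [← exp_nat_mul, ← exp_neg, mul_neg]
    _ ≤ (1 + k * x)⁻¹ := inv_anti₀ (by positivity) (by linarith [add_one_le_exp (k * x)])

lemma abs_one_sub_pow_sub_exp_neg_le {x : ℝ} (hx0 : 0 ≤ x) (hx1 : x ≤ 1) (k : ℕ) :
    |(1 - x) ^ k - exp (-(k * x))| ≤ k * x ^ 2 := by
  have hbase : |(1 - x) - exp (-x)| ≤ x ^ 2 := by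
    rw [abs_sub_comm, show exp (-x) - (1 - x) = exp (-x) - 1 - (-x) by ring, ← neg_sq]
    exact abs_exp_sub_one_sub_id_le (by rw [abs_neg, abs_of_nonneg hx0]; exact hx1)
  have hmax : max |1 - x| |exp (-x)| ≤ 1 := by
    rw [abs_of_nonneg (by linarith), abs_of_pos (exp_pos _)]
    exact max_le (by linarith) (exp_le_one_iff.mpr (by linarith))
  calc |(1 - x) ^ k - exp (-(k * x))|
      = |(1 - x) ^ k - exp (-x) ^ k| := by rw [← exp_nat_mul, mul_neg]
    _ ≤ |(1 - x) - exp (-x)| * k * max |1 - x| |exp (-x)| ^ (k - 1) := abs_pow_sub_pow_le ..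
    _ ≤ x ^ 2 * k * 1 := by
        gcongr
        exact pow_le_one₀ (le_max_of_le_right (abs_nonneg _)) hmax
    _ = k * x ^ 2 := by ring

lemma abs_one_sub_pow_sub_exp_neg_le_add {x u : ℝ} (hx0 : 0 ≤ x) (hx1 : x ≤ 1) {k : ℕ}
    (hku : k * x ≤ u) : |(1 - x) ^ k - exp (-u)| ≤ k * x ^ 2 + (u - k * x) := by
  have hexp : |exp (-(k * x)) - exp (-u)| ≤ u - k * x := by
    rw [abs_of_nonneg (by simpa using hku)]
    exact exp_neg_sub_exp_neg_le (by positivity) hku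
  calc |(1 - x) ^ k - exp (-u)|
      ≤ |(1 - x) ^ k - exp (-(k * x))| + |exp (-(k * x)) - exp (-u)| := abs_sub_le _ _ _
    _ ≤ k * x ^ 2 + (u - k * x) := add_le_add (abs_one_sub_pow_sub_exp_neg_le hx0 hx1 k) hexp

lemma abs_mul_sub_mul_one_sub_sub_le (P Q w u r E : ℝ) (hw : 0 ≤ w) (hr0 : 0 ≤ r) (hr1 : r ≤ 1) :
    |P * w - Q * (1 - r) - (E - 1 + u)| ≤ |P - 1| * w + |w - u| + |Q - 1| + |r - E| := by
  have hQ : |(Q - 1) * (1 - r)| ≤ |Q - 1| := by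
    rw [abs_mul, abs_of_nonneg (by linarith : (0 : ℝ) ≤ 1 - r)]
    exact mul_le_of_le_one_right (abs_nonneg _) (by linarith)
  calc |P * w - Q * (1 - r) - (E - 1 + u)|
      = |(P - 1) * w + (w - u) - (Q - 1) * (1 - r) + (r - E)| := by ring_nf
    _ ≤ |(P - 1) * w| + |w - u| + |(Q - 1) * (1 - r)| + |r - E| := by
        grw [abs_add_le, abs_sub, abs_add_le]
    _ ≤ |P - 1| * w + |w - u| + |Q - 1| + |r - E| := by
        rw [abs_mul, abs_of_nonneg hw]; linarith

lemma sq_div_two_mul_kmsSum_eq {ρ y : ℝ} (hρ : ρ ≠ 1) (m : ℕ) :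
    y ^ 2 / 2 * kmsSum ρ m
      = y / (1 - ρ) * ((1 + ρ) / 2) * (y * m) - (y / (1 - ρ)) ^ 2 * ρ * (1 - ρ ^ m) := by
  have h : (1 - ρ) ^ 2 ≠ 0 := pow_ne_zero 2 (sub_ne_zero.mpr hρ.symm)
  rw [← mul_div_cancel_right₀ (kmsSum ρ m) h, kmsSum_mul_one_sub_sq]
  field_simp
  ring

lemma abs_sq_mul_kmsSum_sub_le {q : ℕ} (hq : q ≠ 0) {x : ℝ} (hx : 0 < x) (hqx : q * x ≤ 1)
    {m : ℕ} {u : ℝ} (hmu : q * x * m ≤ u) (hum : u ≤ q * x * m + q * x) :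
    |(q * x) ^ 2 / 2 * kmsSum ((1 - x) ^ q) m - (exp (-u) - 1 + u)| ≤ (5 + 2 * u) * (q * x) := by
  set y := q * x with hy
  set ρ := (1 - x) ^ q with hρ
  have hxy : x ≤ y :=
    le_mul_of_one_le_left hx.le (by exact_mod_cast Nat.one_le_iff_ne_zero.mpr hq)
  have hx1 : x ≤ 1 := hxy.trans hqx
  have hρ1 : ρ < 1 := pow_lt_one₀ (by linarith) (by linarith) hq
  have hρ_ge : 1 - y ≤ ρ := by
    have h := one_add_mul_le_pow (by linarith : -2 ≤ -x) q
    rw [← sub_eq_add_neg, mul_neg, ← sub_eq_add_neg] at h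
    exact h
  have hρ_le : ρ ≤ (1 + y)⁻¹ := one_sub_pow_le_inv_one_add_mul hx.le hx1 q
  set p := y / (1 - ρ) with hp
  have hp1 : 1 ≤ p := by rw [hp, one_le_div (by linarith)]; linarith
  have hp2 : p ≤ 1 + y := by
    rw [hp, div_le_iff₀ (by linarith)]
    nlinarith [mul_le_mul_of_nonneg_left hρ_le (by positivity : (0:ℝ) ≤ 1 + y),
      inv_mul_cancel₀ (by positivity : (1 + y) ≠ 0)]
  set w := y * m with hw
  have hw0 : 0 ≤ w := by positivity
  have huw : u - w ≤ y := by linarith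
  have hP : |p * ((1 + ρ) / 2) - 1| ≤ y := by
    rw [abs_le]; constructor <;> nlinarith
  have hQ : |p ^ 2 * ρ - 1| ≤ 3 * y := by
    have hp_sq : 1 ≤ p ^ 2 := one_le_pow₀ hp1
    rw [abs_le]; constructor <;> nlinarith
  have hr : |ρ ^ m - exp (-u)| ≤ w * y + y := by
    have hqm : ((q * m : ℕ) : ℝ) * x = w := by rw [hw, hy]; push_cast; ring
    have h := abs_one_sub_pow_sub_exp_neg_le_add hx.le hx1 (hqm ▸ hmu)
    rw [pow_mul, ← hρ, pow_two, ← mul_assoc, hqm] at h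
    nlinarith [mul_le_mul_of_nonneg_left hxy hw0]
  rw [sq_div_two_mul_kmsSum_eq hρ1.ne m, ← hp]
  calc _ ≤ |p * ((1 + ρ) / 2) - 1| * w + |w - u| + |p ^ 2 * ρ - 1| + |ρ ^ m - exp (-u)| :=
        abs_mul_sub_mul_one_sub_sub_le _ _ _ _ _ _ hw0 (by positivity)
          (pow_le_one₀ (by positivity) hρ1.le)
    _ ≤ y * w + y + 3 * y + (w * y + y) := by
        gcongr
        rw [abs_sub_comm, abs_of_nonneg (by linarith)]; exact huw
    _ ≤ (5 + 2 * u) * y := by nlinarith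

lemma abs_Lam_sub_le {q : ℕ} (hq : q ≠ 0) {γ : ℝ} (hγ : 0 < γ) {n : ℕ} (hn : q * γ ≤ n)
    {t : ℝ} (ht : t ∈ Set.Icc (0 : ℝ) 1) :
    |(q : ℝ) ^ 2 * γ ^ 2 / (2 * (n : ℝ) ^ 2) * Lam (1 - γ / n) q n t
        - (exp (-(q * γ * t)) - 1 + q * γ * t)|
      ≤ (5 + 2 * (q * γ)) * (q * γ) / n := by
  have hqγ : 0 < (q : ℝ) * γ := by positivity
  have hn0 : (0 : ℝ) < n := hqγ.trans_le hn
  rw [Lam_eq_kmsSum]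
  set m := ⌊(n : ℝ) * t⌋₊
  have hm_le : (m : ℝ) ≤ n * t := Nat.floor_le (mul_nonneg hn0.le ht.1)
  have hm_gt : (n : ℝ) * t < m + 1 := Nat.lt_floor_add_one _
  have hy : (q : ℝ) * (γ / n) = q * γ / n := mul_div_assoc' ..
  have hcore := abs_sq_mul_kmsSum_sub_le hq (div_pos hγ hn0) (m := m) (u := q * γ * t)
    (by rw [hy, div_le_one hn0]; exact hn)
    (by
      rw [hy, div_mul_eq_mul_div, div_le_iff₀ hn0]
      nlinarith [mul_le_mul_of_nonneg_left hm_le hqγ.le])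
    (by
      rw [hy, div_mul_eq_mul_div, ← add_div, le_div_iff₀ hn0]
      nlinarith [mul_le_mul_of_nonneg_left hm_gt.le hqγ.le])
  have hut : (q : ℝ) * γ * t ≤ q * γ := mul_le_of_le_one_right hqγ.le ht.2
  calc _ = |(q * (γ / n)) ^ 2 / 2 * kmsSum ((1 - γ / n) ^ q) m
          - (exp (-(q * γ * t)) - 1 + q * γ * t)| := by rw [hy]; ring_nf
    _ ≤ (5 + 2 * (q * γ * t)) * (q * γ / n) := hy ▸ hcore
    _ ≤ (5 + 2 * (q * γ)) * (q * γ) / n := by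
        rw [mul_div_assoc']
        gcongr

/-- For `β = 1` and `α_n = 1 − γ/n`,
`(q²γ²/(2n²)) Λ_q(n,t) → exp(−qγt) − 1 + qγt` uniformly in `t ∈ [0,1]`. -/
theorem stmt_5 (q : ℕ) (hq : 1 ≤ q) (γ : ℝ) (hγ : γ ∈ Set.Ioo (0:ℝ) 1) :
    TendstoUniformlyOn
      (fun (n : ℕ) (t : ℝ) =>
        ((q : ℝ) ^ 2 * γ ^ 2 / (2 * (n : ℝ) ^ 2)) * Lam (1 - γ / (n : ℝ)) q n t)
      (fun t => Real.exp (-((q : ℝ) * γ * t)) - 1 + (q : ℝ) * γ * t)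
      Filter.atTop (Set.Icc 0 1) := by
  rw [Metric.tendstoUniformlyOn_iff]
  intro ε hε
  have hrate := tendsto_const_div_atTop_nhds_zero_nat ((5 + 2 * (q * γ)) * (q * γ))
  filter_upwards [hrate.eventually (gt_mem_nhds hε), Filter.eventually_ge_atTop ⌈(q : ℝ) * γ⌉₊]
    with n hn_rate hn_large t ht
  rw [dist_comm, Real.dist_eq]
  exact (abs_Lam_sub_le (by omega) hγ.1 (Nat.ceil_le.mp hn_large) ht).trans_lt hn_rate
end

section
/- Let q ≥ 1 be an integer, γ ∈ (0,1) and β > 1, and set α_n := 1 − γ/n^β. Then sup_{t ∈ [0,1]} | Λ_q(n,t)/n² − t² | → 0 as n → ∞; that is, Λ_q(n,t) = n² t² (1 + o(1)) uniformly in t ∈ [0,1]. -/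
open Finset Filter Topology

theorem tendstoUniformlyOn_of_dist_le {ι α β : Type*} [PseudoMetricSpace β] {p : Filter ι}
    {F : ι → α → β} {f : α → β} {s : Set α} {b : ι → ℝ} (hb : Tendsto b p (𝓝 0))
    (hFb : ∀ᶠ n in p, ∀ x ∈ s, dist (f x) (F n x) ≤ b n) :
    TendstoUniformlyOn F f p s := by
  rw [Metric.tendstoUniformlyOn_iff]
  intro ε hε
  filter_upwards [hFb, hb.eventually (gt_mem_nhds hε)] with n hn hbn x hx
  exact (hn x hx).trans_lt hbn

section PowDist

variable {α : ℝ} (hα₀ : 0 ≤ α) (hα₁ : α ≤ 1) (q m : ℕ)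
include hα₀ hα₁

theorem sum_sum_pow_dist_le_sq :
    ∑ i ∈ Icc 1 m, ∑ j ∈ Icc 1 m, α ^ (q * Nat.dist i j) ≤ (m : ℝ) ^ 2 :=
  calc _ ≤ ∑ i ∈ Icc 1 m, ∑ j ∈ Icc 1 m, (1 : ℝ) := by gcongr; exact pow_le_one₀ hα₀ hα₁
    _ = (m : ℝ) ^ 2 := by simp [sq]

theorem pow_mul_sq_le_sum_sum_pow_dist :
    α ^ (q * m) * (m : ℝ) ^ 2 ≤ ∑ i ∈ Icc 1 m, ∑ j ∈ Icc 1 m, α ^ (q * Nat.dist i j) :=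
  calc α ^ (q * m) * (m : ℝ) ^ 2 = ∑ i ∈ Icc 1 m, ∑ j ∈ Icc 1 m, α ^ (q * m) := by
        simp [sq]; ring
    _ ≤ _ := sum_le_sum fun i hi ↦ sum_le_sum fun j hj ↦ by
      refine pow_le_pow_of_le_one hα₀ hα₁ (Nat.mul_le_mul_left q ?_)
      simp only [mem_Icc] at hi hj
      simp only [Nat.dist]
      omega

end PowDist

theorem natFloor_mul_le_self {n : ℕ} {t : ℝ} (ht : t ≤ 1) : ⌊(n : ℝ) * t⌋₊ ≤ n :=
  Nat.floor_le_of_le (mul_le_of_le_one_right n.cast_nonneg ht)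

theorem sq_sub_natFloor_mul_div_sq_mem_Icc {n : ℕ} (hn : 0 < n) {t : ℝ} (ht : t ∈ Set.Icc 0 1) :
    t ^ 2 - (⌊(n : ℝ) * t⌋₊ / n) ^ 2 ∈ Set.Icc (0 : ℝ) (2 / n) := by
  have hn' : (0 : ℝ) < n := by exact_mod_cast hn
  have hlo : (⌊(n : ℝ) * t⌋₊ : ℝ) / n ≤ t := by
    rw [div_le_iff₀ hn', mul_comm]; exact Nat.floor_le (by nlinarith [ht.1])
  have hhi : t - 1 / n < ⌊(n : ℝ) * t⌋₊ / n := by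
    rw [sub_lt_iff_lt_add, ← add_div, lt_div_iff₀ hn', mul_comm]
    exact Nat.lt_floor_add_one _
  have h0 : (0 : ℝ) ≤ ⌊(n : ℝ) * t⌋₊ / n := by positivity
  have h2 : 2 / (n : ℝ) = 1 / n * 2 := by ring
  constructor <;> nlinarith [ht.2]

theorem abs_sq_sub_Lam_div_sq_le {α : ℝ} (hα₀ : 0 ≤ α) (hα₁ : α ≤ 1) (q : ℕ) {n : ℕ} (hn : 0 < n)
    {t : ℝ} (ht : t ∈ Set.Icc 0 1) :
    |t ^ 2 - Lam α q n t / (n : ℝ) ^ 2| ≤ 2 / n + (1 - α ^ (q * n)) := by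
  set m := ⌊(n : ℝ) * t⌋₊
  have hn' : (0 : ℝ) < n := by exact_mod_cast hn
  have hmn : (m : ℝ) / n ≤ 1 := by
    rw [div_le_one hn']; exact_mod_cast natFloor_mul_le_self ht.2
  have hpow : α ^ (q * n) ≤ α ^ (q * m) :=
    pow_le_pow_of_le_one hα₀ hα₁ (Nat.mul_le_mul_left q (natFloor_mul_le_self ht.2))
  have hupper : Lam α q n t / (n : ℝ) ^ 2 ≤ (m / n) ^ 2 := by
    rw [div_pow]; gcongr; exact sum_sum_pow_dist_le_sq hα₀ hα₁ q m
  have hlower : α ^ (q * n) * (m / n) ^ 2 ≤ Lam α q n t / (n : ℝ) ^ 2 := by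
    rw [div_pow, ← mul_div_assoc]; gcongr
    exact (mul_le_mul_of_nonneg_right hpow (sq_nonneg _)).trans
      (pow_mul_sq_le_sum_sum_pow_dist hα₀ hα₁ q m)
  obtain ⟨hfloor₀, hfloor₁⟩ := sq_sub_natFloor_mul_div_sq_mem_Icc hn ht
  have hsq : ((m : ℝ) / n) ^ 2 ≤ 1 := pow_le_one₀ (by positivity) hmn
  have hP : α ^ (q * n) ≤ 1 := pow_le_one₀ hα₀ hα₁
  -- `Λ/n² ≤ (m/n)² ≤ t²`, so the absolute value is the plain difference
  rw [abs_of_nonneg (by linarith)]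
  nlinarith

theorem one_sub_pow_mul_le_mul_rpow {γ β : ℝ} (hγ : γ ≤ 1) (hβ : 0 ≤ β) (q : ℕ) {n : ℕ}
    (hn : 0 < n) : 1 - (1 - γ / (n : ℝ) ^ β) ^ (q * n) ≤ q * γ * (n : ℝ) ^ (1 - β) := by
  have hn' : (0 : ℝ) < n := by exact_mod_cast hn
  have hnβ : 1 ≤ (n : ℝ) ^ β := Real.one_le_rpow (by exact_mod_cast hn) hβ
  have hx : -2 ≤ -(γ / (n : ℝ) ^ β) := by
    rw [neg_le_neg_iff, div_le_iff₀ (by linarith)]; linarith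
  have hbern := one_add_mul_le_pow hx (q * n)
  have hkx : ((q * n : ℕ) : ℝ) * (γ / (n : ℝ) ^ β) = q * γ * (n : ℝ) ^ (1 - β) := by
    rw [Real.rpow_sub hn', Real.rpow_one]; push_cast; field_simp
  rw [← sub_eq_add_neg] at hbern
  linarith

theorem one_sub_div_rpow_mem_Icc {γ β : ℝ} (hγ₀ : 0 ≤ γ) (hγ₁ : γ ≤ 1) (hβ : 0 ≤ β) {n : ℕ}
    (hn : 0 < n) : 1 - γ / (n : ℝ) ^ β ∈ Set.Icc 0 1 := by
  have hnβ : 1 ≤ (n : ℝ) ^ β := Real.one_le_rpow (by exact_mod_cast hn) hβ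
  have hx₀ : 0 ≤ γ / (n : ℝ) ^ β := by positivity
  have hx₁ : γ / (n : ℝ) ^ β ≤ 1 := by rw [div_le_one (by linarith)]; linarith
  constructor <;> linarith

theorem tendsto_one_sub_pow_mul {γ β : ℝ} (hγ₀ : 0 ≤ γ) (hγ₁ : γ ≤ 1) (hβ : 1 < β) (q : ℕ) :
    Tendsto (fun n : ℕ ↦ 1 - (1 - γ / (n : ℝ) ^ β) ^ (q * n)) atTop (𝓝 0) := by
  have hrpow : Tendsto (fun n : ℕ ↦ (q * γ) * (n : ℝ) ^ (1 - β)) atTop (𝓝 0) := by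
    have h := (tendsto_rpow_neg_atTop (by linarith : 0 < β - 1)).comp tendsto_natCast_atTop_atTop
    simpa [Function.comp_def, neg_sub] using h.const_mul (q * γ)
  refine tendsto_of_tendsto_of_tendsto_of_le_of_le' tendsto_const_nhds hrpow ?_ ?_
  all_goals filter_upwards [eventually_gt_atTop 0] with n hn
  · obtain ⟨hα₀, hα₁⟩ := one_sub_div_rpow_mem_Icc hγ₀ hγ₁ (zero_le_one.trans hβ.le) hn
    exact sub_nonneg.2 (pow_le_one₀ hα₀ hα₁)
  · exact one_sub_pow_mul_le_mul_rpow hγ₁ (by linarith) q hn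

theorem stmt_6_general (q : ℕ) (γ β : ℝ) (hγ : γ ∈ Set.Ioo (0:ℝ) 1) (hβ : 1 < β) :
    TendstoUniformlyOn
      (fun (n : ℕ) (t : ℝ) => Lam (1 - γ / (n : ℝ) ^ β) q n t / (n : ℝ) ^ 2)
      (fun t => t ^ 2) Filter.atTop (Set.Icc 0 1) := by
  obtain ⟨hγ₀, hγ₁⟩ := hγ
  have hbound : Tendsto (fun n : ℕ ↦ 2 / (n : ℝ) + (1 - (1 - γ / (n : ℝ) ^ β) ^ (q * n)))
      atTop (𝓝 0) := by
    simpa using (tendsto_const_div_atTop_nhds_zero_nat 2).add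
      (tendsto_one_sub_pow_mul hγ₀.le hγ₁.le hβ q)
  refine tendstoUniformlyOn_of_dist_le hbound ?_
  filter_upwards [eventually_gt_atTop 0] with n hn t ht
  obtain ⟨hα₀, hα₁⟩ := one_sub_div_rpow_mem_Icc hγ₀.le hγ₁.le (zero_le_one.trans hβ.le) hn
  rw [Real.dist_eq]
  exact abs_sq_sub_Lam_div_sq_le hα₀ hα₁ q hn ht

/-- For `β > 1` and `α_n = 1 − γ/n^β`, `Λ_q(n,t)/n² → t²` uniformly in `t ∈ [0,1]`. -/
theorem stmt_6 (q : ℕ) (hq : 1 ≤ q) (γ β : ℝ) (hγ : γ ∈ Set.Ioo (0:ℝ) 1) (hβ : 1 < β) :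
    TendstoUniformlyOn
      (fun (n : ℕ) (t : ℝ) => Lam (1 - γ / (n : ℝ) ^ β) q n t / (n : ℝ) ^ 2)
      (fun t => t ^ 2) Filter.atTop (Set.Icc 0 1) :=
  stmt_6_general q γ β hγ hβ
end

section
/- Let q ≥ 1 be an integer, γ ∈ (0,1) and β > 1, and set α_n := 1 − γ/n^β. Then lim_{n→∞} n^{β−1} · (1 − Λ_q(n,1)/n²) = qγ/3; equivalently, Λ_q(n,1) = n² (1 − (qγ/3) n^{1−β} + o(n^{1−β})) as n → ∞. (Multiplying by q!, this is the second-order expansion Var S_{n,1}(H_q) = q! n² (1 − (qγ/3) n^{1−β} + o(n^{1−β})) of the variance of the additive functional of the Hermite polynomial H_q along the stationary Gaussian AR(1) array with parameter α_n.) -/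
/-!
Write `α_n ^ q = 1 - ε_n`; then `n^β ε_n = γ ∑_{k<q} α_n^k → qγ`. Bernoulli's inequality and its
second-order counterpart give `1 - kε ≤ (1 - ε)^k ≤ 1 - kε + k²ε²/2`, and `∑_{i,j} |i - j| = (n³ - n)/3`,
so `n² - Λ_q(n,1) = ε_n (n³ - n)/3 + O(n⁴ ε_n²)`. After multiplying by `n^{β-1}/n²` the main term
tends to `qγ/3` and the error term is `O(n^{1-β}) → 0`.
-/

open Finset Filter Topology

theorem pow_le_one_sub_mul_add_sq {ε : ℝ} (h0 : 0 ≤ ε) (h1 : ε ≤ 1) (k : ℕ) :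
    (1 - ε) ^ k ≤ 1 - k * ε + k ^ 2 * ε ^ 2 / 2 := by
  induction k with
  | zero => simp
  | succ k ih =>
    calc (1 - ε) ^ (k + 1) = (1 - ε) * (1 - ε) ^ k := by ring
      _ ≤ (1 - ε) * (1 - k * ε + k ^ 2 * ε ^ 2 / 2) := by gcongr
      _ ≤ 1 - ↑(k + 1) * ε + ↑(k + 1) ^ 2 * ε ^ 2 / 2 := by
        push_cast; nlinarith [mul_nonneg (sq_nonneg (k * ε : ℝ)) h0, sq_nonneg ε]

theorem sum_Icc_dist_succ (n : ℕ) : ∑ i ∈ Icc 1 n, (Nat.dist i (n + 1) : ℝ) = n * (n + 1) / 2 := by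
  induction n with
  | zero => simp
  | succ n ih =>
    have hshift : ∀ i ∈ Icc 1 n, Nat.dist i (n + 1 + 1) = Nat.dist i (n + 1) + 1 := by
      intro i hi
      have := (mem_Icc.mp hi).2
      rw [Nat.dist_eq_sub_of_le (by omega), Nat.dist_eq_sub_of_le (by omega)]
      omega
    rw [sum_Icc_succ_top (by omega), sum_congr rfl fun i hi => by rw [hshift i hi],
      Nat.dist_eq_sub_of_le (by omega)]
    push_cast
    rw [sum_add_distrib, ih]
    simp only [sum_const, Nat.card_Icc, add_tsub_cancel_right, nsmul_eq_mul, mul_one,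
      add_tsub_cancel_left, Nat.cast_one]
    ring

theorem sum_sum_dist_Icc (n : ℕ) :
    ∑ i ∈ Icc 1 n, ∑ j ∈ Icc 1 n, (Nat.dist i j : ℝ) = ((n : ℝ) ^ 3 - n) / 3 := by
  induction n with
  | zero => simp
  | succ n ih =>
    simp only [sum_Icc_succ_top (show 1 ≤ n + 1 by omega), sum_add_distrib, ih,
      sum_Icc_dist_succ, Nat.dist_self]
    simp_rw [Nat.dist_comm (n + 1), sum_Icc_dist_succ]
    push_cast
    ring

/-- The paper's `Λ_q(n,1)` is `distPowSum n (α_n ^ q)`. -/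
def distPowSum (n : ℕ) (x : ℝ) : ℝ := ∑ i ∈ Icc 1 n, ∑ j ∈ Icc 1 n, x ^ Nat.dist i j

theorem sub_le_distPowSum_one_sub {ε : ℝ} (hε : ε ≤ 2) (n : ℕ) :
    n ^ 2 - ε * (((n : ℝ) ^ 3 - n) / 3) ≤ distPowSum n (1 - ε) := by
  calc (n : ℝ) ^ 2 - ε * (((n : ℝ) ^ 3 - n) / 3)
      = ∑ i ∈ Icc 1 n, ∑ j ∈ Icc 1 n, (1 - Nat.dist i j * ε) := by
        simp only [sum_sub_distrib, ← sum_mul, sum_sum_dist_Icc, sum_const, Nat.card_Icc,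
          add_tsub_cancel_right, nsmul_eq_mul, mul_one]
        ring
    _ ≤ distPowSum n (1 - ε) :=
        sum_le_sum fun i _ => sum_le_sum fun j _ => by
          simpa [sub_eq_add_neg] using one_add_mul_le_pow (by linarith : -2 ≤ -ε) (Nat.dist i j)

theorem distPowSum_one_sub_le {ε : ℝ} (h0 : 0 ≤ ε) (h1 : ε ≤ 1) (n : ℕ) :
    distPowSum n (1 - ε) ≤ n ^ 2 - ε * (((n : ℝ) ^ 3 - n) / 3) + n ^ 4 * ε ^ 2 / 2 := by
  calc distPowSum n (1 - ε)
      ≤ ∑ i ∈ Icc 1 n, ∑ j ∈ Icc 1 n, (1 - Nat.dist i j * ε + n ^ 2 * ε ^ 2 / 2) :=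
        sum_le_sum fun i hi => sum_le_sum fun j hj => by
          have hd : (Nat.dist i j : ℝ) ≤ n := by
            have := mem_Icc.mp hi; have := mem_Icc.mp hj
            exact_mod_cast show Nat.dist i j ≤ n by unfold Nat.dist; omega
          refine (pow_le_one_sub_mul_add_sq h0 h1 _).trans ?_
          gcongr
    _ = n ^ 2 - ε * (((n : ℝ) ^ 3 - n) / 3) + n ^ 4 * ε ^ 2 / 2 := by
        simp only [sum_add_distrib, sum_sub_distrib, ← sum_mul, sum_sum_dist_Icc, sum_const,
          Nat.card_Icc, add_tsub_cancel_right, nsmul_eq_mul, mul_one]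
        ring

theorem tendsto_mul_one_sub_distPowSum_div {a ε : ℕ → ℝ} {L : ℝ} (ha : Tendsto a atTop atTop)
    (hε : ∀ᶠ n in atTop, ε n ∈ Set.Icc 0 1) (hL : Tendsto (fun n => a n * n * ε n) atTop (𝓝 L)) :
    Tendsto (fun n => a n * (1 - distPowSum n (1 - ε n) / n ^ 2)) atTop (𝓝 (L / 3)) := by
  set c := fun n => a n * n * ε n
  have hD : Tendsto (fun n : ℕ => (1 - ((n : ℝ) ^ 2)⁻¹) / 3) atTop (𝓝 (1 / 3)) := by
    simpa using ((((tendsto_pow_atTop two_ne_zero).comp tendsto_natCast_atTop_atTop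
      ).inv_tendsto_atTop).const_sub (1 : ℝ)).div_const 3
  have hupper : Tendsto (fun n => c n * ((1 - ((n : ℝ) ^ 2)⁻¹) / 3)) atTop (𝓝 (L / 3)) := by
    simpa [div_eq_mul_one_div L] using hL.mul hD
  have hlower : Tendsto (fun n => c n * ((1 - ((n : ℝ) ^ 2)⁻¹) / 3) - c n ^ 2 / a n / 2) atTop
      (𝓝 (L / 3)) := by
    simpa [div_eq_mul_inv] using hupper.sub (((hL.pow 2).mul ha.inv_tendsto_atTop).div_const 2)
  refine tendsto_of_tendsto_of_tendsto_of_le_of_le' hlower hupper ?_ ?_ <;>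
  filter_upwards [hε, ha.eventually_gt_atTop 0, eventually_ge_atTop 1] with n ⟨h0, h1⟩ hpos hn <;>
  have hn0 : (n : ℝ) ≠ 0 := by positivity
  · calc c n * ((1 - ((n : ℝ) ^ 2)⁻¹) / 3) - c n ^ 2 / a n / 2
        = a n / n ^ 2 * (ε n * (((n : ℝ) ^ 3 - n) / 3) - n ^ 4 * ε n ^ 2 / 2) := by
          simp only [c]; field_simp
      _ ≤ a n / n ^ 2 * (n ^ 2 - distPowSum n (1 - ε n)) := by
          refine mul_le_mul_of_nonneg_left ?_ (by positivity)
          linarith [distPowSum_one_sub_le h0 h1 n]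
      _ = a n * (1 - distPowSum n (1 - ε n) / n ^ 2) := by field_simp
  · calc a n * (1 - distPowSum n (1 - ε n) / n ^ 2)
        = a n / n ^ 2 * (n ^ 2 - distPowSum n (1 - ε n)) := by field_simp
      _ ≤ a n / n ^ 2 * (ε n * (((n : ℝ) ^ 3 - n) / 3)) := by
          refine mul_le_mul_of_nonneg_left ?_ (by positivity)
          linarith [sub_le_distPowSum_one_sub (by linarith : ε n ≤ 2) n]
      _ = c n * ((1 - ((n : ℝ) ^ 2)⁻¹) / 3) := by simp only [c]; field_simp

theorem tendsto_rpow_mul_one_sub_pow_one_sub_div_rpow {β : ℝ} (hβ : 0 < β) (γ : ℝ) (q : ℕ) :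
    Tendsto (fun n : ℕ => (n : ℝ) ^ β * (1 - (1 - γ / n ^ β) ^ q)) atTop (𝓝 (q * γ)) := by
  have ht : Tendsto (fun n : ℕ => γ / (n : ℝ) ^ β) atTop (𝓝 0) :=
    tendsto_const_nhds.div_atTop ((tendsto_rpow_atTop hβ).comp tendsto_natCast_atTop_atTop)
  have hgeom : Tendsto (fun n : ℕ => γ * ∑ k ∈ range q, (1 - γ / (n : ℝ) ^ β) ^ k) atTop
      (𝓝 (q * γ)) := by
    have hcont : Continuous fun t : ℝ => γ * ∑ k ∈ range q, (1 - t) ^ k := by fun_prop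
    simpa [mul_comm γ, Function.comp_def] using (hcont.tendsto 0).comp ht
  refine hgeom.congr' ?_
  filter_upwards [eventually_ge_atTop 1] with n hn
  have hpos : (0 : ℝ) < (n : ℝ) ^ β := by positivity
  rw [← mul_neg_geom_sum, sub_sub_cancel]
  field_simp

theorem one_sub_pow_mem_Icc {x : ℝ} (hx : x ∈ Set.Icc 0 1) (q : ℕ) :
    1 - x ^ q ∈ Set.Icc 0 1 :=
  ⟨sub_nonneg.mpr (pow_le_one₀ hx.1 hx.2), sub_le_self 1 (pow_nonneg hx.1 q)⟩

theorem stmt_7_general (q : ℕ) (γ β : ℝ) (hγ : γ ∈ Set.Ioo (0:ℝ) 1) (hβ : 1 < β) :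
    Filter.Tendsto
      (fun n : ℕ => (n : ℝ) ^ (β - 1) *
        (1 - (∑ i ∈ Finset.Icc 1 n, ∑ j ∈ Finset.Icc 1 n,
              (1 - γ / (n : ℝ) ^ β) ^ (q * Nat.dist i j)) / (n : ℝ) ^ 2))
      Filter.atTop (nhds ((q : ℝ) * γ / 3)) := by
  have ha : Tendsto (fun n : ℕ => (n : ℝ) ^ (β - 1)) atTop atTop :=
    (tendsto_rpow_atTop (by linarith)).comp tendsto_natCast_atTop_atTop
  have hα : ∀ᶠ n : ℕ in atTop, 1 - γ / (n : ℝ) ^ β ∈ Set.Icc 0 1 := by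
    filter_upwards [eventually_ge_atTop 1] with n hn
    have hnβ : 1 ≤ (n : ℝ) ^ β := Real.one_le_rpow (by exact_mod_cast hn) (by linarith)
    have hγn : γ / (n : ℝ) ^ β ≤ γ := div_le_self hγ.1.le hnβ
    constructor
    · linarith [hγ.2]
    · linarith [div_nonneg hγ.1.le (zero_le_one.trans hnβ)]
  have hL : Tendsto (fun n : ℕ => (n : ℝ) ^ (β - 1) * n * (1 - (1 - γ / (n : ℝ) ^ β) ^ q)) atTop
      (𝓝 (q * γ)) := by
    refine (tendsto_rpow_mul_one_sub_pow_one_sub_div_rpow (by linarith) γ q).congr' ?_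
    filter_upwards [eventually_ge_atTop 1] with n hn
    rw [Real.rpow_sub_one (by positivity), div_mul_cancel₀ _ (by positivity)]
  simpa only [distPowSum, sub_sub_cancel, pow_mul] using
    tendsto_mul_one_sub_distPowSum_div ha (hα.mono fun _ h => one_sub_pow_mem_Icc h q) hL

/-- For `β > 1` and `α_n = 1 − γ/n^β`, with `Λ_q(n,1) = ∑_{i,j=1}^n α_n^{q|i−j|}`,
one has `n^{β−1}(1 − Λ_q(n,1)/n²) → qγ/3`, i.e. the second-order variance expansion
`Λ_q(n,1) = n²(1 − (qγ/3) n^{1−β} + o(n^{1−β}))`. -/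
theorem stmt_7 (q : ℕ) (hq : 1 ≤ q) (γ β : ℝ) (hγ : γ ∈ Set.Ioo (0:ℝ) 1) (hβ : 1 < β) :
    Filter.Tendsto
      (fun n : ℕ => (n : ℝ) ^ (β - 1) *
        (1 - (∑ i ∈ Finset.Icc 1 n, ∑ j ∈ Finset.Icc 1 n,
              (1 - γ / (n : ℝ) ^ β) ^ (q * Nat.dist i j)) / (n : ℝ) ^ 2))
      Filter.atTop (nhds ((q : ℝ) * γ / 3)) :=
  stmt_7_general q γ β hγ hβ
end

section
/- There exist absolute constants c > 0 and C > 0 such that for every α ∈ (0,1), every σ > 0, every x ∈ ℝ and every integer j ≥ 0: c · min{ 1, |x| α^j √(1−α²)/σ + α^{2j} } ≤ d_TV( μ_j , π ) ≤ C · min{ 1, |x| α^j √(1−α²)/σ + α^{2j} }, where μ_j := N( α^j x , σ² (1 − α^{2j})/(1 − α²) ) is the law after j steps of the AR(1) recursion X_k = α X_{k−1} + σ ε_k (with i.i.d. standard Gaussian innovations ε_k) started at X_0 = x, and π := N( 0 , σ²/(1 − α²) ) is its invariant distribution. -/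
open MeasureTheory ProbabilityTheory

/-- Total variation distance between two measures on `ℝ`. -/
noncomputable def dTV (μ ν : Measure ℝ) : ℝ :=
  ⨆ A : {A : Set ℝ // MeasurableSet A}, |(μ A.1).toReal - (ν A.1).toReal|

/-!
Write `V = σ²/(1-α²)`, `t = α^{2j} = 1 - s` and `m = α^j x`, so that `μ_j = N(m, sV)` and
`π = N(0, V)`; by the symmetry `y ↦ -y` we may take `m ≥ 0`.

Upper bound: go through `N(m, V)`. Shrinking the variance by the factor `s ≤ 1` raises the density
by at most the factor `1/√s`, so `√s • N(m, sV) ≤ N(m, V)` and these two laws are within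
`1 - √s ≤ t`; the shift by `m` costs at most `m/√(2πV)` by Scheffé's bound.

Lower bound: test the half-line `(-√V, ∞)`. Since `N(m, sV)` is the image of `π` under
`y ↦ √s y + m`, it gives this half-line more mass than `π` does, by at least the `π`-mass of an
interval of length `min(m + √V t/2, √V)` inside `[-2√V, -√V]`, where the density of `π` is at
least `e^{-2}/√(2πV)`.
-/

open Real Set
open scoped NNReal ENNReal

section TotalVariation

variable {μ ν : Measure ℝ}

lemma dTV_le {B : ℝ} (h : ∀ A, MeasurableSet A → |μ.real A - ν.real A| ≤ B) : dTV μ ν ≤ B :=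
  ciSup_le fun A ↦ h A.1 A.2

variable [IsFiniteMeasure μ] [IsFiniteMeasure ν]

lemma abs_measureReal_sub_le_dTV {A : Set ℝ} (hA : MeasurableSet A) :
    |μ.real A - ν.real A| ≤ dTV μ ν := by
  refine le_ciSup (f := fun B : {B : Set ℝ // MeasurableSet B} ↦ |μ.real B.1 - ν.real B.1|)
    ⟨μ.real univ + ν.real univ, ?_⟩ ⟨A, hA⟩
  rintro _ ⟨B, rfl⟩
  refine (abs_sub _ _).trans (add_le_add ?_ ?_) <;>
    simpa only [abs_of_nonneg measureReal_nonneg] using measureReal_mono (subset_univ _)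

lemma dTV_triangle {ρ : Measure ℝ} [IsFiniteMeasure ρ] : dTV μ ρ ≤ dTV μ ν + dTV ν ρ :=
  dTV_le fun A hA ↦ (abs_sub_le _ (ν.real A) _).trans <|
    add_le_add (abs_measureReal_sub_le_dTV hA) (abs_measureReal_sub_le_dTV hA)

lemma dTV_map_le {f : ℝ → ℝ} (hf : Measurable f) : dTV (μ.map f) (ν.map f) ≤ dTV μ ν :=
  dTV_le fun A hA ↦ by
    simpa only [map_measureReal_apply hf hA] using abs_measureReal_sub_le_dTV (hf hA)

lemma measureReal_sub_le_of_restrict_le {S : Set ℝ} (hS : MeasurableSet S)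
    (hS_le : ν.restrict S ≤ μ.restrict S) (hSc_le : μ.restrict Sᶜ ≤ ν.restrict Sᶜ)
    {A : Set ℝ} (hA : MeasurableSet A) :
    μ.real A - ν.real A ≤ μ.real S - ν.real S := by
  have hA_diff : μ.real (A \ S) ≤ ν.real (A \ S) := by
    have h := hSc_le A
    rw [Measure.restrict_apply hA, Measure.restrict_apply hA, ← sdiff_eq] at h
    exact ENNReal.toReal_mono (measure_ne_top _ _) h
  have hS_diff : ν.real (S \ A) ≤ μ.real (S \ A) := by
    have h := hS_le (S \ A)
    rw [Measure.restrict_apply (hS.diff hA), Measure.restrict_apply (hS.diff hA),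
      inter_eq_left.2 sdiff_subset] at h
    exact ENNReal.toReal_mono (measure_ne_top _ _) h
  rw [← measureReal_inter_add_sdiff (μ := μ) (s := A) hS,
    ← measureReal_inter_add_sdiff (μ := ν) (s := A) hS,
    ← measureReal_inter_add_sdiff (μ := μ) (s := S) hA,
    ← measureReal_inter_add_sdiff (μ := ν) (s := S) hA, inter_comm S A]
  linarith

end TotalVariation

section ProbabilityTotalVariation

variable {μ ν : Measure ℝ} [IsProbabilityMeasure μ] [IsProbabilityMeasure ν]

lemma sub_measureReal_eq_compl {A : Set ℝ} (hA : MeasurableSet A) :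
    ν.real A - μ.real A = μ.real Aᶜ - ν.real Aᶜ := by
  rw [probReal_compl_eq_one_sub hA, probReal_compl_eq_one_sub hA]
  ring

lemma dTV_le_one : dTV μ ν ≤ 1 :=
  dTV_le fun A _ ↦ abs_sub_le_iff.2
    ⟨by linarith [measureReal_le_one (μ := μ) (s := A), measureReal_nonneg (μ := ν) (s := A)],
     by linarith [measureReal_le_one (μ := ν) (s := A), measureReal_nonneg (μ := μ) (s := A)]⟩

lemma dTV_le_of_smul_le {c : ℝ≥0} (h : c • μ ≤ ν) : dTV μ ν ≤ 1 - c := by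
  have hle : ∀ B, c * μ.real B ≤ ν.real B := fun B ↦ by
    have h' := ENNReal.toReal_mono (measure_ne_top _ _) (h B)
    rwa [← measureReal_def, ← measureReal_def, measureReal_nnreal_smul_apply] at h'
  have hc : (c : ℝ) ≤ 1 := by simpa using hle univ
  have key : ∀ B, μ.real B - ν.real B ≤ 1 - c := fun B ↦ by
    nlinarith [hle B, measureReal_le_one (μ := μ) (s := B)]
  refine dTV_le fun A hA ↦ abs_sub_le_iff.2 ⟨key A, ?_⟩
  rw [sub_measureReal_eq_compl hA]
  exact key Aᶜ

lemma dTV_le_of_restrict_le {S : Set ℝ} (hS : MeasurableSet S)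
    (hS_le : ν.restrict S ≤ μ.restrict S) (hSc_le : μ.restrict Sᶜ ≤ ν.restrict Sᶜ) :
    dTV μ ν ≤ μ.real S - ν.real S := by
  refine dTV_le fun A hA ↦ abs_sub_le_iff.2
    ⟨measureReal_sub_le_of_restrict_le hS hS_le hSc_le hA, ?_⟩
  rw [sub_measureReal_eq_compl (μ := ν) (ν := μ) hS]
  exact measureReal_sub_le_of_restrict_le hS.compl hSc_le (by rwa [compl_compl]) hA

end ProbabilityTotalVariation

section Gaussian

variable {μ : ℝ} {v : ℝ≥0}

lemma gaussianPDFReal_le_gaussianPDFReal {μ' y z : ℝ} (h : |y - μ'| ≤ |z - μ|) :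
    gaussianPDFReal μ v z ≤ gaussianPDFReal μ' v y := by
  simp only [gaussianPDFReal]
  gcongr ?_ * rexp (-?_ / _)
  exact sq_le_sq.2 h

lemma gaussianReal_restrict_le_of_pdf_le {μ' : ℝ} {v' : ℝ≥0} (hv : v ≠ 0) (hv' : v' ≠ 0)
    {S : Set ℝ} (hS : MeasurableSet S)
    (h : ∀ y ∈ S, gaussianPDFReal μ v y ≤ gaussianPDFReal μ' v' y) :
    (gaussianReal μ v).restrict S ≤ (gaussianReal μ' v').restrict S := by
  rw [gaussianReal_of_var_ne_zero _ hv, gaussianReal_of_var_ne_zero _ hv',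
    restrict_withDensity hS, restrict_withDensity hS]
  refine withDensity_mono ((ae_restrict_iff' hS).2 (ae_of_all _ fun y hy ↦ ?_))
  exact ENNReal.ofReal_le_ofReal (h y hy)

lemma gaussianReal_real_apply (hv : v ≠ 0) (s : Set ℝ) :
    (gaussianReal μ v).real s = ∫ x in s, gaussianPDFReal μ v x := by
  rw [measureReal_def, gaussianReal_apply_eq_integral _ hv,
    ENNReal.toReal_ofReal (setIntegral_nonneg_of_ae (ae_of_all _ (gaussianPDFReal_nonneg _ _)))]

lemma gaussianReal_real_Ioc_le (hv : v ≠ 0) {a b : ℝ} (hab : a ≤ b) :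
    (gaussianReal μ v).real (Ioc a b) ≤ (b - a) * gaussianPDFReal μ v μ := by
  rw [gaussianReal_real_apply hv, mul_comm, ← volume_real_Ioc_of_le hab]
  refine (le_abs_self _).trans ?_
  rw [← Real.norm_eq_abs]
  refine norm_setIntegral_le_of_norm_le_const measure_Ioc_lt_top fun y _ ↦ ?_
  rw [Real.norm_of_nonneg (gaussianPDFReal_nonneg _ _ _)]
  exact gaussianPDFReal_le_gaussianPDFReal (by simp)

lemma le_gaussianReal_real_Ioc (hv : v ≠ 0) {a b R : ℝ} (hab : a ≤ b) (ha : μ - R ≤ a)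
    (hb : b ≤ μ + R) :
    (b - a) * gaussianPDFReal μ v (μ + R) ≤ (gaussianReal μ v).real (Ioc a b) := by
  rw [gaussianReal_real_apply hv, ← volume_real_Ioc_of_le hab, mul_comm]
  refine setIntegral_ge_of_const_le_real measurableSet_Ioc measure_Ioc_lt_top.ne
    (fun y hy ↦ gaussianPDFReal_le_gaussianPDFReal ?_) (integrable_gaussianPDFReal _ _).integrableOn
  rw [add_sub_cancel_left, abs_le]
  constructor <;> linarith [hy.1, hy.2, le_abs_self R, neg_abs_le R]

lemma sqrt_mul_gaussianPDFReal_le {s : ℝ≥0} (hv : v ≠ 0) (hs0 : s ≠ 0) (hs : s ≤ 1) (y : ℝ) :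
    √(s : ℝ) * gaussianPDFReal μ (s * v) y ≤ gaussianPDFReal μ v y := by
  have hsqrt : √(2 * π * (s * v : ℝ≥0)) = √(s : ℝ) * √(2 * π * v) := by
    rw [NNReal.coe_mul, show 2 * π * (s * v : ℝ) = s * (2 * π * v) by ring,
      Real.sqrt_mul (NNReal.coe_nonneg s)]
  have hs_pos : 0 < √(s : ℝ) := Real.sqrt_pos.2 (NNReal.coe_pos.2 (pos_iff_ne_zero.2 hs0))
  rw [gaussianPDFReal, gaussianPDFReal, hsqrt, mul_inv, ← mul_assoc,
    mul_inv_cancel_left₀ hs_pos.ne', neg_div, neg_div]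
  gcongr
  exact mul_le_of_le_one_left v.2 hs

lemma smul_gaussianReal_le (hv : v ≠ 0) {s : ℝ≥0} (hs : s ≤ 1) :
    NNReal.sqrt s • gaussianReal μ (s * v) ≤ gaussianReal μ v := by
  rcases eq_or_ne s 0 with rfl | hs0
  · simpa using Measure.zero_le _
  rw [gaussianReal_of_var_ne_zero _ (mul_ne_zero hs0 hv), gaussianReal_of_var_ne_zero _ hv,
    ENNReal.smul_def, ← withDensity_smul' _ _ ENNReal.coe_ne_top]
  refine withDensity_mono (ae_of_all _ fun y ↦ ?_)
  simp only [Pi.smul_apply, gaussianPDF, smul_eq_mul, ← ENNReal.ofReal_coe_nnreal, Real.coe_sqrt]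
  rw [← ENNReal.ofReal_mul (Real.sqrt_nonneg _)]
  exact ENNReal.ofReal_le_ofReal (sqrt_mul_gaussianPDFReal_le hv hs0 hs y)

end Gaussian

section GaussianTotalVariation

variable {m : ℝ} {v : ℝ≥0}

lemma dTV_gaussianReal_mul_var_le (hv : v ≠ 0) {s : ℝ≥0} (hs : s ≤ 1) :
    dTV (gaussianReal m (s * v)) (gaussianReal m v) ≤ 1 - s := by
  have hs_le_sqrt : (s : ℝ) ≤ NNReal.sqrt s := by
    rw [Real.coe_sqrt, Real.le_sqrt (NNReal.coe_nonneg s) (NNReal.coe_nonneg s)]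
    nlinarith [NNReal.coe_nonneg s, (NNReal.coe_le_one).2 hs]
  linarith [dTV_le_of_smul_le (smul_gaussianReal_le (μ := m) hv hs)]

lemma dTV_gaussianReal_shift_le (hv : v ≠ 0) (hm : 0 ≤ m) :
    dTV (gaussianReal m v) (gaussianReal 0 v) ≤ m / √(2 * π * v) := by
  have hS_le :
      (gaussianReal 0 v).restrict (Ioi (m / 2)) ≤ (gaussianReal m v).restrict (Ioi (m / 2)) :=
    gaussianReal_restrict_le_of_pdf_le hv hv measurableSet_Ioi fun y hy ↦
      gaussianPDFReal_le_gaussianPDFReal (abs_le_abs (by linarith) (by linarith [mem_Ioi.1 hy]))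
  have hSc_le :
      (gaussianReal m v).restrict (Ioi (m / 2))ᶜ ≤ (gaussianReal 0 v).restrict (Ioi (m / 2))ᶜ :=
    gaussianReal_restrict_le_of_pdf_le hv hv measurableSet_Ioi.compl fun y hy ↦ by
      rw [mem_compl_iff, mem_Ioi, not_lt] at hy
      exact gaussianPDFReal_le_gaussianPDFReal <| (abs_sub_comm m y).symm ▸
        abs_le_abs (by linarith) (by linarith)
  have hshift :
      (gaussianReal m v).real (Ioi (m / 2)) = (gaussianReal 0 v).real (Ioi (-(m / 2))) := by
    rw [← zero_add m, ← gaussianReal_map_add_const,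
      map_measureReal_apply (measurable_add_const _) measurableSet_Ioi, preimage_add_const_Ioi]
    ring_nf
  have hsplit : (gaussianReal 0 v).real (Ioi (-(m / 2)))
      = (gaussianReal 0 v).real (Ioc (-(m / 2)) (m / 2))
        + (gaussianReal 0 v).real (Ioi (m / 2)) := by
    rw [← measureReal_union (Ioc_disjoint_Ioi le_rfl) measurableSet_Ioi,
      Ioc_union_Ioi_eq_Ioi (by linarith)]
  calc dTV (gaussianReal m v) (gaussianReal 0 v)
      ≤ (gaussianReal m v).real (Ioi (m / 2)) - (gaussianReal 0 v).real (Ioi (m / 2)) :=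
        dTV_le_of_restrict_le measurableSet_Ioi hS_le hSc_le
    _ = (gaussianReal 0 v).real (Ioc (-(m / 2)) (m / 2)) := by rw [hshift, hsplit]; ring
    _ ≤ (m / 2 - -(m / 2)) * gaussianPDFReal 0 v 0 := gaussianReal_real_Ioc_le hv (by linarith)
    _ = m / √(2 * π * v) := by simp only [gaussianPDFReal]; ring_nf; simp

lemma dTV_gaussianReal_neg_le (m : ℝ) (v w : ℝ≥0) :
    dTV (gaussianReal (-m) v) (gaussianReal 0 w) ≤ dTV (gaussianReal m v) (gaussianReal 0 w) := by
  simpa [gaussianReal_map_neg] using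
    dTV_map_le (μ := gaussianReal m v) (ν := gaussianReal 0 w) measurable_neg

lemma dTV_gaussianReal_abs (m : ℝ) (v w : ℝ≥0) :
    dTV (gaussianReal |m| v) (gaussianReal 0 w) = dTV (gaussianReal m v) (gaussianReal 0 w) := by
  rcases le_total 0 m with hm | hm
  · rw [abs_of_nonneg hm]
  · rw [abs_of_nonpos hm]
    refine le_antisymm (dTV_gaussianReal_neg_le m v w) ?_
    simpa using dTV_gaussianReal_neg_le (-m) v w

theorem dTV_gaussianReal_le (hv : v ≠ 0) (hm : 0 ≤ m) {s : ℝ≥0} (hs : s ≤ 1) :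
    dTV (gaussianReal m (s * v)) (gaussianReal 0 v) ≤ min 1 (m / √v + (1 - s)) := by
  refine le_min dTV_le_one ?_
  have hmean : m / √(2 * π * v) ≤ m / √v :=
    div_le_div_of_nonneg_left hm (Real.sqrt_pos.2 (NNReal.coe_pos.2 (pos_iff_ne_zero.2 hv)))
      (Real.sqrt_le_sqrt (le_mul_of_one_le_left v.2 (by nlinarith [pi_gt_three])))
  calc dTV (gaussianReal m (s * v)) (gaussianReal 0 v)
      ≤ dTV (gaussianReal m (s * v)) (gaussianReal m v)
        + dTV (gaussianReal m v) (gaussianReal 0 v) :=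
        dTV_triangle
    _ ≤ (1 - s) + m / √(2 * π * v) :=
        add_le_add (dTV_gaussianReal_mul_var_le hv hs) (dTV_gaussianReal_shift_le hv hm)
    _ ≤ m / √v + (1 - s) := by linarith

theorem le_dTV_gaussianReal (hv : v ≠ 0) (hm : 0 ≤ m) {s : ℝ≥0} (hs : s ≤ 1) :
    exp (-2) / √(2 * π) / 2 * min 1 (m / √v + (1 - s))
      ≤ dTV (gaussianReal m (s * v)) (gaussianReal 0 v) := by
  set r := √(v : ℝ) with hr_def
  have hr : 0 < r := Real.sqrt_pos.2 (NNReal.coe_pos.2 (pos_iff_ne_zero.2 hv))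
  set q := √(s : ℝ)
  have hq0 : 0 ≤ q := Real.sqrt_nonneg _
  have hqs : q ^ 2 = s := Real.sq_sqrt (NNReal.coe_nonneg s)
  set L := min (m + r * (1 - s) / 2) r
  have hL0 : 0 ≤ L := le_min (by nlinarith [(NNReal.coe_le_one).2 hs]) hr.le
  have hmap : (gaussianReal 0 v).map (fun y ↦ q * y + m) = gaussianReal m (s * v) := by
    have hcomp : (fun y ↦ q * y + m) = (· + m) ∘ (q * ·) := rfl
    rw [hcomp, ← Measure.map_map (measurable_add_const m) (measurable_const_mul q),
      gaussianReal_map_const_mul, gaussianReal_map_add_const, mul_zero, zero_add]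
    congr
  have hpre : Ioi (-r - L) ⊆ (fun y ↦ q * y + m) ⁻¹' Ioi (-r) := by
    intro y hy
    rw [mem_Ioi] at hy
    rw [mem_preimage, mem_Ioi]
    -- `q (r + L) ≤ r + m`, because `q (3 - q²) ≤ 2` on `[0, 1]`
    have hL : L ≤ m + r * (1 - q ^ 2) / 2 := hqs ▸ min_le_left _ _
    rcases hq0.eq_or_lt with hq | hq
    · rw [← hq]; linarith
    · nlinarith [mul_nonneg (mul_nonneg (sq_nonneg (1 - q)) (by linarith : (0:ℝ) ≤ q + 2)) hr.le,
        mul_lt_mul_of_pos_left hy hq, mul_le_mul_of_nonneg_left hL hq0]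
  have hgain : (gaussianReal 0 v).real (Ioc (-r - L) (-r))
      ≤ (gaussianReal m (s * v)).real (Ioi (-r)) - (gaussianReal 0 v).real (Ioi (-r)) := by
    have h := measureReal_mono (μ := gaussianReal 0 v) hpre
    rw [← Ioc_union_Ioi_eq_Ioi (by linarith : -r - L ≤ -r),
      measureReal_union (Ioc_disjoint_Ioi le_rfl) measurableSet_Ioi] at h
    rw [← hmap, map_measureReal_apply (by fun_prop) measurableSet_Ioi]
    linarith
  have hpdf : gaussianPDFReal 0 v (0 + 2 * r) * r = exp (-2) / √(2 * π) := by
    have hsq : √(2 * π * v) = √(2 * π) * r := Real.sqrt_mul (by positivity) _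
    rw [gaussianPDFReal, hsq, sub_zero, zero_add, mul_pow, hr_def,
      Real.sq_sqrt (NNReal.coe_nonneg v)]
    field_simp
  have hLr : r * min 1 (m / r + (1 - s)) / 2 ≤ L := by
    have hmin := min_le_left 1 (m / r + (1 - s))
    have hmin' := min_le_right 1 (m / r + (1 - s))
    have hmr : r * (m / r) = m := mul_div_cancel₀ m hr.ne'
    refine le_min ?_ (by nlinarith)
    nlinarith [mul_le_mul_of_nonneg_left hmin' hr.le]
  calc exp (-2) / √(2 * π) / 2 * min 1 (m / r + (1 - s))
      = r * min 1 (m / r + (1 - s)) / 2 * gaussianPDFReal 0 v (0 + 2 * r) := by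
        rw [← hpdf]; ring
    _ ≤ (-r - (-r - L)) * gaussianPDFReal 0 v (0 + 2 * r) := by
        rw [show -r - (-r - L) = L by ring]
        exact mul_le_mul_of_nonneg_right hLr (gaussianPDFReal_nonneg _ _ _)
    _ ≤ (gaussianReal 0 v).real (Ioc (-r - L) (-r)) :=
        le_gaussianReal_real_Ioc hv (by linarith)
          (by linarith [min_le_right (m + r * (1 - s) / 2) r]) (by linarith)
    _ ≤ |(gaussianReal m (s * v)).real (Ioi (-r)) - (gaussianReal 0 v).real (Ioi (-r))| :=
        hgain.trans (le_abs_self _)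
    _ ≤ dTV (gaussianReal m (s * v)) (gaussianReal 0 v) :=
        abs_measureReal_sub_le_dTV measurableSet_Ioi

end GaussianTotalVariation

/-- Two-sided total variation bound for the AR(1) semigroup: with
`μ_j = N(α^j x, σ²(1−α^{2j})/(1−α²))` the law after `j` steps started at `x` and
`π = N(0, σ²/(1−α²))` the invariant law,
`c·min{1, |x|α^j √(1−α²)/σ + α^{2j}} ≤ d_TV(μ_j, π) ≤ C·min{1, |x|α^j √(1−α²)/σ + α^{2j}}`
with absolute constants `c, C > 0`. -/
theorem stmt_17 :
    ∃ c > (0:ℝ), ∃ C > (0:ℝ), ∀ (α σ x : ℝ), α ∈ Set.Ioo (0:ℝ) 1 → 0 < σ → ∀ j : ℕ,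
      c * min 1 (|x| * α ^ j * Real.sqrt (1 - α ^ 2) / σ + α ^ (2 * j))
          ≤ dTV (gaussianReal (α ^ j * x)
                  (Real.toNNReal (σ ^ 2 * (1 - α ^ (2 * j)) / (1 - α ^ 2))))
                (gaussianReal 0 (Real.toNNReal (σ ^ 2 / (1 - α ^ 2)))) ∧
      dTV (gaussianReal (α ^ j * x)
              (Real.toNNReal (σ ^ 2 * (1 - α ^ (2 * j)) / (1 - α ^ 2))))
            (gaussianReal 0 (Real.toNNReal (σ ^ 2 / (1 - α ^ 2))))
          ≤ C * min 1 (|x| * α ^ j * Real.sqrt (1 - α ^ 2) / σ + α ^ (2 * j)) := by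
  refine ⟨exp (-2) / √(2 * π) / 2, by positivity, 1, one_pos, fun α σ x ⟨hα0, hα1⟩ hσ j ↦ ?_⟩
  have hgap : 0 < 1 - α ^ 2 := by nlinarith
  have hα2j : α ^ (2 * j) ≤ 1 := pow_le_one₀ hα0.le hα1.le
  set v := (σ ^ 2 / (1 - α ^ 2)).toNNReal with hv_def
  set s := (1 - α ^ (2 * j)).toNNReal with hs_def
  have hv : v ≠ 0 := by rw [hv_def]; positivity
  have hs : s ≤ 1 := Real.toNNReal_le_one.2 (by linarith [pow_nonneg hα0.le (2 * j)])
  have hvar : (σ ^ 2 * (1 - α ^ (2 * j)) / (1 - α ^ 2)).toNNReal = s * v := by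
    rw [hs_def, hv_def, ← Real.toNNReal_mul (by linarith), mul_div_assoc', mul_comm]
  have hratio : |x| * α ^ j * √(1 - α ^ 2) / σ + α ^ (2 * j) = |α ^ j * x| / √v + (1 - s) := by
    rw [hv_def, hs_def, Real.coe_toNNReal _ (by positivity), Real.coe_toNNReal _ (by linarith),
      Real.sqrt_div (sq_nonneg σ), Real.sqrt_sq hσ.le, abs_mul, abs_of_pos (pow_pos hα0 j)]
    field_simp
    ring
  rw [hvar, hratio, one_mul, ← dTV_gaussianReal_abs]
  exact ⟨le_dTV_gaussianReal hv (abs_nonneg _) hs, dTV_gaussianReal_le hv (abs_nonneg _) hs⟩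
end

section
/- Let q ≥ 1 be an integer and γ ∈ (0,1); set α_n := 1 − γ/n, Λ_q(n) := ∑_{i,j=1}^n α_n^{q|i−j|}, and K_{q,n} := n^{1+q/2} (1 − α_n²)^{q/2} / √( q! Λ_q(n) ). Then K_{q,n} converges as n → ∞ to K_q^{(γ)} := √( 2^{q−1} q² γ^{q+2} / ( q! (exp(−qγ) − 1 + qγ) ) ); moreover there exists a constant C = C(γ,q) > 0 such that |K_{q,n} − K_q^{(γ)}| ≤ C/n for all n ≥ 1. -/
/-- The normalizing ratio `K_{q,n} = n^{1+q/2}(1−α_n²)^{q/2}/√(q! Λ_q(n))` with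
`α_n = 1 − γ/n` and `Λ_q(n) = ∑_{i,j=1}^n α_n^{q|i−j|}`. -/
noncomputable def Kqn (γ : ℝ) (q n : ℕ) : ℝ :=
  (n : ℝ) ^ (1 + (q : ℝ) / 2) * (1 - (1 - γ / (n : ℝ)) ^ 2) ^ ((q : ℝ) / 2) /
    Real.sqrt ((q.factorial : ℝ) *
      ∑ i ∈ Finset.Icc 1 n, ∑ j ∈ Finset.Icc 1 n, (1 - γ / (n : ℝ)) ^ (q * Nat.dist i j))

/-- The limiting normalizing constant
`K_q^{(γ)} = √(2^{q−1} q² γ^{q+2} / (q!(exp(−qγ) − 1 + qγ)))`. -/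
noncomputable def Kq (γ : ℝ) (q : ℕ) : ℝ :=
  Real.sqrt ((2 : ℝ) ^ (q - 1) * (q : ℝ) ^ 2 * γ ^ (q + 2) /
    ((q.factorial : ℝ) * (Real.exp (-((q : ℝ) * γ)) - 1 + (q : ℝ) * γ)))

open Filter Topology Asymptotics Finset Real
open scoped Nat

/-! Put `x = γ/n` and `ρ = (1 - x)^q`. The Toeplitz sum satisfies
`(1 - ρ)² Λ = n(1 - ρ²) - 2ρ(1 - ρⁿ)`, and `1 - ρ = x ∑_{k<q} (1 - x)^k` removes the apparent
singularity at `x = 0`. Hence `K_{q,n}` and `K_q^{(γ)}` are the values of one function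
`kProfile γ q` at `(γ/n, (1 - γ/n)ⁿ)` and at `(0, e^{-γ})`, where it is differentiable. Both
arguments converge at rate `O(1/n)` (the second because `log(1 + y) = y + O(y²)`), and a
function differentiable at the limit point preserves that rate. -/

theorem DifferentiableAt.isBigO_comp_sub {𝕜 E F G α : Type*} [NontriviallyNormedField 𝕜]
    [NormedAddCommGroup E] [NormedSpace 𝕜 E] [NormedAddCommGroup F] [NormedSpace 𝕜 F]
    [NormedAddCommGroup G] {l : Filter α} {Φ : E → F} {c : E} {v : α → E} {g : α → G}
    (hΦ : DifferentiableAt 𝕜 Φ c) (hv : (fun a => v a - c) =O[l] g) (hg : Tendsto g l (𝓝 0)) :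
    (fun a => Φ (v a) - Φ c) =O[l] g := by
  have hvc : Tendsto v l (𝓝 c) := by
    simpa using (hv.trans_tendsto hg).add_const c
  exact (hΦ.isBigO_sub.comp_tendsto hvc).trans hv

theorem isBigO_nat_mul_log_one_add_div_sub (t : ℝ) :
    (fun n : ℕ => n * log (1 + t / n) - t) =O[atTop] (fun n : ℕ => (n : ℝ)⁻¹) := by
  refine IsBigO.of_bound (2 * t ^ 2) ?_
  filter_upwards [eventually_gt_atTop ⌈2 * |t|⌉₊] with n hn
  have hn' : 2 * |t| < n := Nat.lt_of_ceil_lt hn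
  have hn0 : (0 : ℝ) < n := by linarith [abs_nonneg t]
  have hy : |-(t / n)| ≤ 1 / 2 := by
    rw [abs_neg, abs_div, Nat.abs_cast, div_le_iff₀ hn0]; linarith
  have htaylor := abs_log_sub_add_sum_range_le (x := -(t / n)) (by linarith) 1
  simp only [range_one, sum_singleton, zero_add, pow_one, Nat.cast_zero, div_one,
    sub_neg_eq_add] at htaylor
  have hid : (n : ℝ) * log (1 + t / n) - t = n * (-(t / n) + log (1 + t / n)) := by
    field_simp; ring
  rw [Real.norm_eq_abs, Real.norm_eq_abs, hid, abs_mul, Nat.abs_cast, abs_inv, Nat.abs_cast]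
  calc (n : ℝ) * |-(t / n) + log (1 + t / n)|
      ≤ n * (|-(t / n)| ^ 2 / (1 - |-(t / n)|)) := by gcongr
    _ ≤ n * (2 * |-(t / n)| ^ 2) := by
      gcongr; rw [div_le_iff₀ (by linarith)]; nlinarith [sq_nonneg |-(t / n)|]
    _ = 2 * t ^ 2 * (n : ℝ)⁻¹ := by
      rw [abs_neg, abs_div, Nat.abs_cast, div_pow, sq_abs]; field_simp

theorem isBigO_one_add_div_pow_sub_exp (t : ℝ) :
    (fun n : ℕ => (1 + t / n) ^ n - exp t) =O[atTop] (fun n : ℕ => (n : ℝ)⁻¹) := by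
  refine (differentiableAt_exp.isBigO_comp_sub (isBigO_nat_mul_log_one_add_div_sub t)
    tendsto_inv_atTop_nhds_zero_nat).congr' ?_ EventuallyEq.rfl
  filter_upwards [eventually_gt_atTop ⌈|t|⌉₊] with n hn
  have hn0 : (0 : ℝ) < n := (abs_nonneg t).trans_lt (Nat.lt_of_ceil_lt hn)
  have hpos : 0 < 1 + t / n := by
    have : |t / n| < 1 := by
      rw [abs_div, Nat.abs_cast, div_lt_one hn0]; exact Nat.lt_of_ceil_lt hn
    linarith [neg_abs_le (t / n)]
  rw [← exp_log (pow_pos hpos n), log_pow]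

theorem one_sub_sq_mul_sum_pow_dist {R : Type*} [CommRing R] (ρ : R) (n : ℕ) :
    (1 - ρ) ^ 2 * ∑ i ∈ Icc 1 n, ∑ j ∈ Icc 1 n, ρ ^ Nat.dist i j
      = n * (1 - ρ ^ 2) - 2 * ρ * (1 - ρ ^ n) := by
  induction n with
  | zero => simp
  | succ n ih =>
    have hrow : ∑ j ∈ Icc 1 n, ρ ^ Nat.dist (n + 1) j = ρ * ∑ d ∈ range n, ρ ^ d := by
      rw [mul_sum]
      refine sum_bij' (fun j _ => n - j) (fun d _ => n - d) ?_ ?_ ?_ ?_ ?_ <;>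
        intro a ha <;> simp only [mem_Icc, mem_range] at ha ⊢ <;> try omega
      rw [Nat.dist_comm, Nat.dist_eq_sub_of_le (by omega), ← pow_succ']; congr 1; omega
    have hcol : ∑ i ∈ Icc 1 n, ρ ^ Nat.dist i (n + 1) = ρ * ∑ d ∈ range n, ρ ^ d := by
      simp_rw [Nat.dist_comm _ (n + 1)]; exact hrow
    simp only [sum_Icc_succ_top (by omega : 1 ≤ n + 1), sum_add_distrib, hrow, hcol,
      Nat.dist_self]
    push_cast
    linear_combination ih + 2 * ρ * (1 - ρ) * mul_neg_geom_sum ρ n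

noncomputable def kProfile (γ : ℝ) (q : ℕ) (z : ℝ × ℝ) : ℝ :=
  √(γ ^ (q + 2) * (2 - z.1) ^ q * (∑ k ∈ range q, (1 - z.1) ^ k) ^ 2 /
    (q ! * (γ * (∑ k ∈ range q, (1 - z.1) ^ k) * (1 + (1 - z.1) ^ q)
      - 2 * (1 - z.1) ^ q * (1 - z.2 ^ q))))

theorem Kqn_eq_kProfile {γ : ℝ} {q n : ℕ} (hq : 1 ≤ q) (hγ : 0 < γ) (hn : γ < n) :
    Kqn γ q n = kProfile γ q (γ / n, (1 - γ / n) ^ n) := by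
  have hn0 : (0 : ℝ) < n := hγ.trans hn
  rw [Kqn, kProfile]
  generalize hx : γ / (n : ℝ) = x
  have hnx : n * x = γ := by rw [← hx]; field_simp
  have hx0 : 0 < x := by rw [← hx]; positivity
  have hx1 : x < 1 := by rwa [← hx, div_lt_one hn0]
  set s := ∑ k ∈ range q, (1 - x) ^ k
  have hxs : x * s = 1 - (1 - x) ^ q := by rw [← mul_neg_geom_sum, sub_sub_cancel]
  have hs0 : 0 < s :=
    sum_pos (fun k _ => pow_pos (by linarith) k) (nonempty_range_iff.2 (by omega))
  set Λ := ∑ i ∈ Icc 1 n, ∑ j ∈ Icc 1 n, (1 - x) ^ (q * Nat.dist i j) with hΛ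
  have hΛ0 : 0 < Λ := by
    have : (Icc 1 n).Nonempty := nonempty_Icc.2 (by exact_mod_cast hn0)
    exact sum_pos (fun i _ => sum_pos (fun j _ => pow_pos (by linarith) _) this) this
  have hclosed : (x * s) ^ 2 * Λ =
      γ * s * (1 + (1 - x) ^ q) - 2 * (1 - x) ^ q * (1 - ((1 - x) ^ n) ^ q) := by
    simp only [hΛ, hxs, pow_mul, one_sub_sq_mul_sum_pow_dist]
    rw [← pow_mul, pow_right_comm]
    linear_combination (-(1 + (1 - x) ^ q) * n) * hxs + (1 + (1 - x) ^ q) * s * hnx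
  have hnum : (n : ℝ) ^ (1 + (q : ℝ) / 2) * (1 - (1 - x) ^ 2) ^ ((q : ℝ) / 2)
      = √((n : ℝ) ^ 2 * (γ * (2 - x)) ^ q) := by
    have h2x : n * (1 - (1 - x) ^ 2) = γ * (2 - x) := by linear_combination (2 - x) * hnx
    rw [sqrt_mul (sq_nonneg _), sqrt_sq hn0.le, sqrt_eq_rpow, ← rpow_natCast _ q,
      ← rpow_mul (by nlinarith), rpow_add hn0, rpow_one, mul_assoc,
      ← mul_rpow hn0.le (by nlinarith), h2x]
    ring_nf
  rw [hnum, ← sqrt_div' _ (by positivity)]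
  congr 1
  rw [← hclosed, div_eq_div_iff (by positivity) (by positivity), mul_pow]
  linear_combination (γ ^ q * (2 - x) ^ q * q ! * s ^ 2 * Λ * (n * x + γ)) * hnx

theorem Kq_eq_kProfile {γ : ℝ} {q : ℕ} (hq : 1 ≤ q) :
    Kq γ q = kProfile γ q (0, exp (-γ)) := by
  have h2 : (2 : ℝ) ^ q = 2 * 2 ^ (q - 1) := by rw [← pow_succ', Nat.sub_add_cancel hq]
  simp only [Kq, kProfile, sub_zero, one_pow, sum_const, card_range, nsmul_eq_mul, mul_one,
    ← exp_nat_mul, mul_neg, h2]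
  congr 1
  rw [show γ ^ (q + 2) * (2 * 2 ^ (q - 1)) * (q : ℝ) ^ 2 = 2 * (2 ^ (q - 1) * q ^ 2 * γ ^ (q + 2))
      by ring,
    show (q ! : ℝ) * (γ * q * (1 + 1) - 2 * (1 - exp (-(q * γ))))
      = 2 * (q ! * (exp (-(q * γ)) - 1 + q * γ)) by ring,
    mul_div_mul_left _ _ two_ne_zero]

theorem differentiableAt_kProfile {γ : ℝ} {q : ℕ} (hq : 1 ≤ q) (hγ : 0 < γ) :
    DifferentiableAt ℝ (kProfile γ q) (0, exp (-γ)) := by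
  have hE : 0 < exp (-(q * γ)) - 1 + q * γ := by
    linarith [add_one_lt_exp (x := -(q * γ)) (neg_ne_zero.2 (by positivity))]
  have hD : (q ! : ℝ) * (γ * q * (1 + 1) - 2 * (1 - exp (-(q * γ)))) ≠ 0 :=
    mul_ne_zero (Nat.cast_ne_zero.2 q.factorial_ne_zero) (by linarith)
  unfold kProfile
  apply DifferentiableAt.sqrt
  · simp only [div_eq_mul_inv]
    fun_prop (disch := simpa only [sub_zero, one_pow, sum_const, card_range, nsmul_eq_mul,
      mul_one, ← exp_nat_mul, mul_neg] using hD)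
  · simp only [sub_zero, one_pow, sum_const, card_range, nsmul_eq_mul, mul_one, ← exp_nat_mul,
      mul_neg]
    exact div_ne_zero (by positivity) hD

theorem isBigO_Kqn_sub_Kq {γ : ℝ} {q : ℕ} (hq : 1 ≤ q) (hγ : 0 < γ) :
    (fun n : ℕ => Kqn γ q n - Kq γ q) =O[atTop] (fun n : ℕ => (n : ℝ)⁻¹) := by
  have hz : (fun n : ℕ => (γ / n, (1 - γ / n) ^ n) - (0, exp (-γ))) =O[atTop]
      (fun n : ℕ => (n : ℝ)⁻¹) := by
    simp only [Prod.mk_sub_mk, sub_zero]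
    refine IsBigO.prod_left ?_ ?_
    · simpa only [div_eq_mul_inv] using (isBigO_refl _ _).const_mul_left γ
    · simpa only [sub_eq_add_neg, neg_div] using isBigO_one_add_div_pow_sub_exp (-γ)
  refine ((differentiableAt_kProfile hq hγ).isBigO_comp_sub hz
    tendsto_inv_atTop_nhds_zero_nat).congr' ?_ EventuallyEq.rfl
  filter_upwards [eventually_gt_atTop ⌈γ⌉₊] with n hn
  rw [Kqn_eq_kProfile hq hγ (Nat.lt_of_ceil_lt hn), Kq_eq_kProfile hq]

/-- At the phase transition `β = 1`, `K_{q,n} → K_q^{(γ)}`, with rate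
`|K_{q,n} − K_q^{(γ)}| ≤ C/n`. -/
theorem stmt_19 (q : ℕ) (hq : 1 ≤ q) (γ : ℝ) (hγ : γ ∈ Set.Ioo (0:ℝ) 1) :
    Filter.Tendsto (fun n : ℕ => Kqn γ q n) Filter.atTop (nhds (Kq γ q)) ∧
    ∃ C > (0:ℝ), ∀ n : ℕ, 1 ≤ n → |Kqn γ q n - Kq γ q| ≤ C / n := by
  have hrate := isBigO_Kqn_sub_Kq hq hγ.1
  refine ⟨tendsto_sub_nhds_zero_iff.1 (hrate.trans_tendsto tendsto_inv_atTop_nhds_zero_nat), ?_⟩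
  obtain ⟨C, hC, hbound⟩ := bound_of_isBigO_nat_atTop hrate
  refine ⟨C, hC, fun n hn => ?_⟩
  have hn0 : (n : ℝ) ≠ 0 := by positivity
  simpa only [Real.norm_eq_abs, abs_inv, Nat.abs_cast, div_eq_mul_inv]
    using hbound (inv_ne_zero hn0)
end
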